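/- arXiv:1501.02470 — 5 statements merged into one kernel-verified Lean document; each statement's English description precedes it below -/
import Mathlib

section
/- Let K be a finite field with |K| = q, let W be a finite-dimensional K-vector space, and let (U,V) be a nontrivial solution of the isometry equation with tuples of length m = q+1 such that max_i dim_K V_i = max_i dim_K U_i = n > 1. Define X = {i ∈ {1,…,m} : dim_K V_i = n−1} and Y = {i ∈ {1,…,m} : dim_K U_i = n−1}. Then |X| = |Y| and |X| ≤ 1. -/
open Finset
open scoped Classical

/-- The pair of tuples `(U, V)` is a solution of the isometry equation
`∑ i, (1/|V i|) • 1_{V i} = ∑ i, (1/|U i|) • 1_{U i}` as real-valued functions on `W`. -/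
def IsometrySolution {K W : Type*} [Field K] [AddCommGroup W] [Module K W]
    {m : ℕ} (U V : Fin m → Submodule K W) : Prop :=
  ∀ w : W,
    ∑ i, ((Nat.card ↥(V i) : ℝ))⁻¹ * (if w ∈ V i then 1 else 0) =
    ∑ i, ((Nat.card ↥(U i) : ℝ))⁻¹ * (if w ∈ U i then 1 else 0)

/-- Two tuples of subspaces are equivalent if one is a permutation of the other. -/
def TuplesEquiv {K W : Type*} [Field K] [AddCommGroup W] [Module K W]
    {m : ℕ} (U V : Fin m → Submodule K W) : Prop :=
  ∃ π : Equiv.Perm (Fin m), ∀ i, V i = U (π i)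

/-!
Multiplied by `q ^ n`, the isometry equation becomes an identity of `ℕ`-valued functions in which
a member of dimension `d` contributes `q ^ (n - d)` on each of its points. The key geometric fact
is that a space is never covered by `q` proper subspaces. Applied to a member of maximal
dimension, after cancelling the members common to `U` and `V`, it shows that `U` and `V` share no
member. Modulo `q` only the `n`-dimensional members are seen: if fewer than `q` members of `V`
were `n`-dimensional, an `n`-dimensional `V i` would be covered by the `n`-dimensional `U j`, so
all `q + 1` members of `U`, and then (evaluating at `0`) all members of `V`, would be
`n`-dimensional. Hence each side has at most one member of smaller dimension, and evaluation
at `0` shows that the two have the same dimension.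
-/

theorem Equiv.Perm.exists_eq_comp_of_map_univ_eq {ι α : Type*} [Fintype ι] {f g : ι → α}
    (h : Finset.univ.val.map f = Finset.univ.val.map g) :
    ∃ σ : Equiv.Perm ι, ∀ i, f i = g (σ i) := by
  have hfiber (a : α) : Fintype.card {i // f i = a} = Fintype.card {i // g i = a} := by
    simpa [Multiset.count_map, Fintype.card_subtype, Finset.card, Finset.filter_val, eq_comm] using
      congrArg (Multiset.count a) h
  exact ⟨Equiv.ofFiberEquiv fun a => Fintype.equivOfCardEq (hfiber a),
    fun i => (Equiv.ofFiberEquiv_map _ i).symm⟩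

theorem Multiset.disjoint_sub_sub {α : Type*} [DecidableEq α] (s t : Multiset α) :
    Disjoint (s - t) (t - s) := by
  rw [Multiset.disjoint_left]
  intro a hs ht
  rw [Multiset.mem_sub] at hs ht
  omega

theorem Finset.exists_forall_ne_of_card_le_card_filter_add_one {ι : Type*} [Fintype ι]
    [Nonempty ι] {p : ι → Prop} [DecidablePred p] (h : Fintype.card ι ≤ #{i | p i} + 1) :
    ∃ i₀, ∀ i ≠ i₀, p i := by
  have hsplit := card_filter_add_card_filter_not (s := univ) fun i => p i
  obtain ⟨i₀, hi₀⟩ := card_le_one_iff_subset_singleton.mp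
    (show #{i | ¬ p i} ≤ 1 by rw [card_univ] at hsplit; omega)
  exact ⟨i₀, fun i hi => by_contra fun hpi => hi (mem_singleton.mp (hi₀ (by simpa using hpi)))⟩

theorem Finset.card_filter_eq_ite_of_forall_ne {ι : Type*} [Fintype ι] {p : ι → Prop}
    [DecidablePred p] {i₀ : ι} (h : ∀ i ≠ i₀, ¬ p i) :
    #{i | p i} = if p i₀ then 1 else 0 := by
  rw [card_filter, Fintype.sum_eq_single i₀ fun i hi => if_neg (h i hi)]

section

variable {K W : Type*} [Field K] [Fintype K] [AddCommGroup W] [Module K W]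

/-- For a multiset of subspaces of dimension at most `t`, this is `q ^ t` times the corresponding
side of the isometry equation at `w`. -/
noncomputable def weightedCount (t : ℕ) (𝒮 : Multiset (Submodule K W)) (w : W) : ℕ :=
  (𝒮.map fun S : Submodule K W =>
    if w ∈ S then Fintype.card K ^ (t - Module.finrank K S) else 0).sum

@[simp]
theorem weightedCount_add (t : ℕ) (𝒮 𝒯 : Multiset (Submodule K W)) (w : W) :
    weightedCount t (𝒮 + 𝒯) w = weightedCount t 𝒮 w + weightedCount t 𝒯 w := by
  simp [weightedCount]

theorem weightedCount_eq_zero_iff {t : ℕ} {𝒮 : Multiset (Submodule K W)} {w : W} :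
    weightedCount t 𝒮 w = 0 ↔ ∀ S ∈ 𝒮, w ∉ S := by
  simp [weightedCount, Multiset.sum_eq_zero_iff, Fintype.card_ne_zero]

section Tuple

variable {ι : Type*} [Fintype ι] {n : ℕ} {X : ι → Submodule K W}

theorem weightedCount_map_univ (t : ℕ) (X : ι → Submodule K W) (w : W) :
    weightedCount t (univ.val.map X) w =
      ∑ i, if w ∈ X i then Fintype.card K ^ (t - Module.finrank K (X i)) else 0 := by
  rw [weightedCount, Multiset.map_map]; rfl

theorem weightedCount_map_univ_modEq (hX : ∀ i, Module.finrank K (X i) ≤ n) (w : W) :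
    weightedCount n (univ.val.map X) w ≡
      #{i | Module.finrank K (X i) = n ∧ w ∈ X i} [MOD Fintype.card K] := by
  rw [weightedCount_map_univ, Finset.card_filter]
  refine Nat.ModEq.sum fun i _ => ?_
  by_cases hi : Module.finrank K (X i) = n
  · simp only [hi, true_and, Nat.sub_self, pow_zero]
    split_ifs <;> rfl
  · have : n - Module.finrank K (X i) ≠ 0 := by have := hX i; omega
    simp only [hi, false_and, if_false]
    split_ifs
    exacts [Nat.modEq_zero_iff_dvd.mpr (dvd_pow_self _ this), rfl]

theorem weightedCount_map_univ_zero :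
    weightedCount n (univ.val.map X) 0 = ∑ i, Fintype.card K ^ (n - Module.finrank K (X i)) := by
  simp [weightedCount_map_univ]

theorem weightedCount_map_univ_zero_eq_card_iff (hX : ∀ i, Module.finrank K (X i) ≤ n) :
    weightedCount n (univ.val.map X) 0 = Fintype.card ι ↔ ∀ i, Module.finrank K (X i) = n := by
  rw [weightedCount_map_univ_zero, Fintype.card_eq_sum_ones (α := ι), eq_comm,
    Finset.sum_eq_sum_iff_of_le fun i _ => Nat.one_le_pow _ _ Fintype.card_pos]
  have hq : Fintype.card K ≠ 1 := Fintype.one_lt_card.ne'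
  refine ⟨fun h i => ?_, fun h i _ => by simp [h i]⟩
  have := hX i
  have := h i (mem_univ i)
  simp [eq_comm (a := 1), hq] at this
  omega

theorem weightedCount_map_univ_zero_of_forall_ne {i₀ : ι} (h : ∀ i ≠ i₀, Module.finrank K (X i) = n) :
    weightedCount n (univ.val.map X) 0 =
      Fintype.card K ^ (n - Module.finrank K (X i₀)) + (Fintype.card ι - 1) := by
  rw [weightedCount_map_univ_zero, Fintype.sum_eq_add_sum_compl i₀]
  congr 1
  rw [sum_congr rfl fun i hi => by rw [h i (by simpa using hi), Nat.sub_self, pow_zero]]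
  simp [card_compl]

theorem finrank_eq_finrank_of_weightedCount_zero_eq {U V : ι → Submodule K W} {i₀ j₀ : ι}
    (heq : weightedCount n (univ.val.map V) 0 = weightedCount n (univ.val.map U) 0)
    (hV : Module.finrank K (V i₀) ≤ n) (hU : Module.finrank K (U j₀) ≤ n)
    (hi₀ : ∀ i ≠ i₀, Module.finrank K (V i) = n) (hj₀ : ∀ j ≠ j₀, Module.finrank K (U j) = n) :
    Module.finrank K (V i₀) = Module.finrank K (U j₀) := by
  rw [weightedCount_map_univ_zero_of_forall_ne hi₀, weightedCount_map_univ_zero_of_forall_ne hj₀,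
    Nat.add_right_cancel_iff] at heq
  have := Nat.pow_right_injective Fintype.one_lt_card heq
  omega

end Tuple

variable [FiniteDimensional K W]

theorem Submodule.natCard_eq_pow_finrank (S : Submodule K W) :
    Nat.card S = Fintype.card K ^ Module.finrank K S := by
  rw [Module.natCard_eq_pow_finrank (K := K), Nat.card_eq_fintype_card]

theorem Submodule.card_mul_natCard_le_of_lt {A S : Submodule K W} (h : A < S) :
    Fintype.card K * Nat.card A ≤ Nat.card S := by
  rw [A.natCard_eq_pow_finrank, S.natCard_eq_pow_finrank, ← pow_succ']
  exact Nat.pow_le_pow_right Fintype.card_pos (Submodule.finrank_lt_finrank_of_lt h)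

theorem Submodule.card_lt_card_of_forall_mem_exists {ι : Type*} (S : Submodule K W)
    (T : ι → Submodule K W) (s : Finset ι) (hcover : ∀ w ∈ S, ∃ i ∈ s, w ∈ T i)
    (hproper : ∀ i ∈ s, ¬ S ≤ T i) : Fintype.card K < s.card := by
  have : Finite W := Module.finite_of_finite K
  set q := Fintype.card K
  have hq : 2 ≤ q := Fintype.one_lt_card
  set N := Nat.card S
  have hle (i) (hi : i ∈ s) : q * Nat.card ↥(T i ⊓ S) ≤ N :=
    Submodule.card_mul_natCard_le_of_lt <|
      inf_le_right.lt_of_ne fun h => hproper i hi (h ▸ inf_le_left)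
  obtain ⟨i₀, hi₀, -⟩ := hcover 0 S.zero_mem
  have hqN : q ≤ N := (Nat.le_mul_of_pos_right q Nat.card_pos).trans (hle i₀ hi₀)
  have hcount : N - 1 ≤ ∑ i ∈ s, (Nat.card ↥(T i ⊓ S) - 1) := by
    have hsub : (S : Set W) \ {0} ⊆ ⋃ i ∈ s, ((T i ⊓ S : Submodule K W) : Set W) \ {0} := by
      rintro w ⟨hwS, hw0⟩
      obtain ⟨i, hi, hwT⟩ := hcover w hwS
      exact Set.mem_biUnion hi ⟨⟨hwT, hwS⟩, hw0⟩
    have hcard (A : Submodule K W) : ((A : Set W) \ {0}).ncard = Nat.card A - 1 := by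
      rw [Set.ncard_sdiff_singleton_of_mem A.zero_mem, ← Nat.card_coe_set_eq]; rfl
    simpa only [hcard] using (Set.ncard_le_ncard hsub).trans (s.set_ncard_biUnion_le _)
  by_contra! hs
  have : q * (N - 1) ≤ q * (N - q) :=
    calc q * (N - 1) ≤ ∑ i ∈ s, q * (Nat.card ↥(T i ⊓ S) - 1) := by
          rw [← Finset.mul_sum]; exact Nat.mul_le_mul_left q hcount
      _ ≤ ∑ _i ∈ s, (N - q) := Finset.sum_le_sum fun i hi => by
          rw [Nat.mul_sub_one]; exact Nat.sub_le_sub_right (hle i hi) q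
      _ = s.card * (N - q) := by rw [Finset.sum_const, smul_eq_mul]
      _ ≤ q * (N - q) := Nat.mul_le_mul_right _ hs
  have := Nat.le_of_mul_le_mul_left this (by omega)
  omega

theorem cast_weightedCount_map_univ {ι : Type*} [Fintype ι] {t : ℕ} {X : ι → Submodule K W}
    (hX : ∀ i, Module.finrank K (X i) ≤ t) (w : W) :
    (weightedCount t (univ.val.map X) w : ℝ) =
      Fintype.card K ^ t * ∑ i, (Nat.card (X i) : ℝ)⁻¹ * (if w ∈ X i then 1 else 0) := by
  rw [weightedCount_map_univ, Finset.mul_sum]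
  push_cast
  refine Finset.sum_congr rfl fun i _ => ?_
  split_ifs
  · rw [Submodule.natCard_eq_pow_finrank, Nat.cast_pow, mul_one, pow_sub₀ _ (by positivity) (hX i)]
  · simp

theorem IsometrySolution.weightedCount_eq {m t : ℕ} {U V : Fin m → Submodule K W}
    (hsol : IsometrySolution U V)
    (hV : ∀ i, Module.finrank K (V i) ≤ t) (hU : ∀ i, Module.finrank K (U i) ≤ t) (w : W) :
    weightedCount t (univ.val.map V) w = weightedCount t (univ.val.map U) w := by
  exact_mod_cast (cast_weightedCount_map_univ hV w).trans
    ((congrArg _ (hsol w)).trans (cast_weightedCount_map_univ hU w).symm)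

/-- Every vector of `S` is counted by `𝒱`, hence lies in a member of `𝒰`; by maximality of `S`
these members are proper in `S`. -/
theorem card_lt_card_of_mem_of_weightedCount_eq {t : ℕ} {𝒱 𝒰 : Multiset (Submodule K W)}
    {S : Submodule K W} (hS𝒱 : S ∈ 𝒱) (hS𝒰 : S ∉ 𝒰)
    (hmax : ∀ T ∈ 𝒰, Module.finrank K T ≤ Module.finrank K S)
    (heq : ∀ w, weightedCount t 𝒱 w = weightedCount t 𝒰 w) :
    Fintype.card K < Multiset.card 𝒰 := by
  refine (Submodule.card_lt_card_of_forall_mem_exists S id 𝒰.toFinset ?_ ?_).trans_le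
    (Multiset.toFinset_card_le 𝒰)
  · intro w hw
    have h𝒰 : weightedCount t 𝒰 w ≠ 0 :=
      heq w ▸ fun h => weightedCount_eq_zero_iff.mp h S hS𝒱 hw
    obtain ⟨T, hT, hwT⟩ : ∃ T ∈ 𝒰, w ∈ T := by simpa [weightedCount_eq_zero_iff] using h𝒰
    exact ⟨T, Multiset.mem_toFinset.mpr hT, hwT⟩
  · intro T hT hST
    rw [Multiset.mem_toFinset] at hT
    exact hS𝒰 (Submodule.eq_of_le_of_finrank_le hST (hmax T hT) ▸ hT)

theorem card_lt_card_or_card_lt_card_of_weightedCount_eq {t : ℕ}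
    {𝒱 𝒰 : Multiset (Submodule K W)} (hdisj : Disjoint 𝒱 𝒰) (hne : 𝒱 + 𝒰 ≠ 0)
    (heq : ∀ w, weightedCount t 𝒱 w = weightedCount t 𝒰 w) :
    Fintype.card K < Multiset.card 𝒱 ∨ Fintype.card K < Multiset.card 𝒰 := by
  obtain ⟨S, hS, hmax⟩ :=
    Multiset.exists_max_image (fun T : Submodule K W => Module.finrank K T) hne
  rcases Multiset.mem_add.mp hS with hS𝒱 | hS𝒰
  · exact .inr <| card_lt_card_of_mem_of_weightedCount_eq hS𝒱
      (Multiset.disjoint_left.mp hdisj hS𝒱) (fun T hT => hmax T (Multiset.mem_add.mpr (.inr hT)))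
      heq
  · exact .inl <| card_lt_card_of_mem_of_weightedCount_eq hS𝒰
      (Multiset.disjoint_right.mp hdisj hS𝒰) (fun T hT => hmax T (Multiset.mem_add.mpr (.inl hT)))
      fun w => (heq w).symm

theorem eq_of_weightedCount_eq {t : ℕ} {𝒱 𝒰 : Multiset (Submodule K W)}
    (h𝒱 : Multiset.card 𝒱 ≤ Fintype.card K + 1) (h𝒰 : Multiset.card 𝒰 ≤ Fintype.card K + 1)
    {S : Submodule K W} (hS𝒱 : S ∈ 𝒱) (hS𝒰 : S ∈ 𝒰)
    (heq : ∀ w, weightedCount t 𝒱 w = weightedCount t 𝒰 w) : 𝒱 = 𝒰 := by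
  have hsplit𝒱 : 𝒱 - 𝒰 + 𝒱 ∩ 𝒰 = 𝒱 := Multiset.sub_add_inter 𝒱 𝒰
  have hsplit𝒰 : 𝒰 - 𝒱 + 𝒱 ∩ 𝒰 = 𝒰 := by
    rw [Multiset.inter_comm]; exact Multiset.sub_add_inter 𝒰 𝒱
  have hreduced (w : W) : weightedCount t (𝒱 - 𝒰) w = weightedCount t (𝒰 - 𝒱) w := by
    have h𝒱w := congrArg (weightedCount t · w) hsplit𝒱
    have h𝒰w := congrArg (weightedCount t · w) hsplit𝒰
    simp only [weightedCount_add] at h𝒱w h𝒰w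
    have := heq w
    omega
  have hcommon : 0 < Multiset.card (𝒱 ∩ 𝒰) :=
    Multiset.card_pos_iff_exists_mem.mpr ⟨S, Multiset.mem_inter.mpr ⟨hS𝒱, hS𝒰⟩⟩
  have hcard𝒱 := congrArg Multiset.card hsplit𝒱
  have hcard𝒰 := congrArg Multiset.card hsplit𝒰
  rw [Multiset.card_add] at hcard𝒱 hcard𝒰
  by_contra hne
  have hne' : 𝒱 - 𝒰 + (𝒰 - 𝒱) ≠ 0 := by
    rw [Ne, add_eq_zero, tsub_eq_zero_iff_le, tsub_eq_zero_iff_le]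
    exact fun h => hne (le_antisymm h.1 h.2)
  have := card_lt_card_or_card_lt_card_of_weightedCount_eq (Multiset.disjoint_sub_sub 𝒱 𝒰) hne'
    hreduced
  omega

theorem IsometrySolution.ne_of_not_tuplesEquiv {m : ℕ} {U V : Fin m → Submodule K W}
    (hsol : IsometrySolution U V) (hnontriv : ¬ TuplesEquiv U V) (hm : m ≤ Fintype.card K + 1)
    (i j : Fin m) : V i ≠ U j := by
  intro hij
  have hcard (X : Fin m → Submodule K W) :
      Multiset.card (univ.val.map X) ≤ Fintype.card K + 1 := by
    simpa using hm
  have h := eq_of_weightedCount_eq (hcard V) (hcard U)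
    (Multiset.mem_map_of_mem V (mem_univ_val i)) (hij ▸ Multiset.mem_map_of_mem U (mem_univ_val j))
    (hsol.weightedCount_eq (fun _ => Submodule.finrank_le _) (fun _ => Submodule.finrank_le _))
  obtain ⟨π, hπ⟩ := Equiv.Perm.exists_eq_comp_of_map_univ_eq h
  exact hnontriv ⟨π, hπ⟩

theorem card_le_card_filter_finrank_eq {n : ℕ} {U V : Fin (Fintype.card K + 1) → Submodule K W}
    (heq : ∀ w, weightedCount n (univ.val.map V) w = weightedCount n (univ.val.map U) w)
    (hne : ∀ i j, V i ≠ U j) (hV : ∀ i, Module.finrank K (V i) ≤ n)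
    (hU : ∀ j, Module.finrank K (U j) ≤ n) (htop : ∃ i, Module.finrank K (V i) = n) :
    Fintype.card K ≤ #{i | Module.finrank K (V i) = n} := by
  obtain ⟨i₀, hi₀⟩ := htop
  by_contra! hlt
  have hcover (w : W) (hw : w ∈ V i₀) : ∃ j ∈ ({j | Module.finrank K (U j) = n} : Finset _),
      w ∈ U j := by
    have hmod := weightedCount_map_univ_modEq hV w
    rw [heq w] at hmod
    replace hmod := hmod.symm.trans (weightedCount_map_univ_modEq hU w)
    have hpos : 0 < #{i | Module.finrank K (V i) = n ∧ w ∈ V i} :=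
      card_pos.mpr ⟨i₀, by simp [hi₀, hw]⟩
    have hlt' : #{i | Module.finrank K (V i) = n ∧ w ∈ V i} < Fintype.card K :=
      (card_le_card fun i => by simp +contextual).trans_lt hlt
    obtain ⟨j, hj⟩ : (filter (fun j => Module.finrank K (U j) = n ∧ w ∈ U j) univ).Nonempty := by
      rw [← card_pos, Nat.pos_iff_ne_zero]
      intro h
      rw [h, Nat.ModEq, Nat.zero_mod, Nat.mod_eq_of_lt hlt'] at hmod
      omega
    simp only [mem_filter, mem_univ, true_and] at hj
    exact ⟨j, by simp [hj.1], hj.2⟩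
  have hproper (j) (hj : j ∈ ({j | Module.finrank K (U j) = n} : Finset _)) : ¬ V i₀ ≤ U j :=
    fun hle => hne i₀ j <| Submodule.eq_of_le_of_finrank_le hle (by simp_all)
  have hUtop : ∀ j, Module.finrank K (U j) = n := by
    have hcard : #{j | Module.finrank K (U j) = n} = #(univ : Finset (Fin (Fintype.card K + 1))) :=
      le_antisymm (card_filter_le _ _) <| by
        simpa using Submodule.card_lt_card_of_forall_mem_exists (V i₀) U _ hcover hproper
    intro j
    simpa using card_filter_eq_iff.mp hcard j (mem_univ j)
  have hVtop := (weightedCount_map_univ_zero_eq_card_iff hV).mp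
    ((heq 0).trans ((weightedCount_map_univ_zero_eq_card_iff hU).mpr hUtop))
  simp [hVtop] at hlt

end

theorem nontrivial_solution_card_X_eq_card_Y_general
    (K W : Type*) [Field K] [Fintype K] [AddCommGroup W] [Module K W]
    [FiniteDimensional K W]
    (U V : Fin (Fintype.card K + 1) → Submodule K W)
    (hsol : IsometrySolution U V) (hnontriv : ¬ TuplesEquiv U V)
    (n : ℕ)
    (hmaxV : (Finset.univ.sup fun i => Module.finrank K ↥(V i)) = n)
    (hmaxU : (Finset.univ.sup fun i => Module.finrank K ↥(U i)) = n) :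
    (Finset.univ.filter fun i => Module.finrank K ↥(V i) = n - 1).card =
      (Finset.univ.filter fun i => Module.finrank K ↥(U i) = n - 1).card ∧
    (Finset.univ.filter fun i => Module.finrank K ↥(V i) = n - 1).card ≤ 1 := by
  have hV (i) : Module.finrank K (V i) ≤ n :=
    hmaxV ▸ le_sup (f := fun i => Module.finrank K (V i)) (mem_univ i)
  have hU (j) : Module.finrank K (U j) ≤ n :=
    hmaxU ▸ le_sup (f := fun j => Module.finrank K (U j)) (mem_univ j)
  have htop {X : Fin (Fintype.card K + 1) → Submodule K W}
      (hX : (univ.sup fun i => Module.finrank K (X i)) = n) : ∃ i, Module.finrank K (X i) = n := by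
    obtain ⟨i, -, hi⟩ := exists_mem_eq_sup univ univ_nonempty fun i => Module.finrank K (X i)
    exact ⟨i, hi ▸ hX⟩
  have hne := hsol.ne_of_not_tuplesEquiv hnontriv le_rfl
  have hn : n ≠ 0 := by
    rintro rfl
    exact hne 0 0 <| by rw [Submodule.finrank_eq_zero.mp (Nat.le_zero.mp (hV 0)),
      Submodule.finrank_eq_zero.mp (Nat.le_zero.mp (hU 0))]
  have heq := hsol.weightedCount_eq hV hU
  obtain ⟨i₀, hi₀⟩ := exists_forall_ne_of_card_le_card_filter_add_one
    (p := fun i => Module.finrank K (V i) = n) <| by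
      simpa using card_le_card_filter_finrank_eq heq hne hV hU (htop hmaxV)
  obtain ⟨j₀, hj₀⟩ := exists_forall_ne_of_card_le_card_filter_add_one
    (p := fun j => Module.finrank K (U j) = n) <| by
      simpa using card_le_card_filter_finrank_eq (fun w => (heq w).symm)
        (fun j i h => hne i j h.symm) hU hV (htop hmaxU)
  have hdim := finrank_eq_finrank_of_weightedCount_zero_eq (heq 0) (hV i₀) (hU j₀) hi₀ hj₀
  rw [card_filter_eq_ite_of_forall_ne fun i hi => by have := hi₀ i hi; omega,
    card_filter_eq_ite_of_forall_ne fun j hj => by have := hj₀ j hj; omega, hdim]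
  exact ⟨rfl, by split_ifs <;> simp⟩

/-- In a nontrivial minimal solution with equal maximal dimensions `n > 1`, the number of
spaces of dimension `n - 1` is the same in both tuples and is at most one. -/
theorem nontrivial_solution_card_X_eq_card_Y
    (K W : Type*) [Field K] [Fintype K] [AddCommGroup W] [Module K W]
    [FiniteDimensional K W]
    (U V : Fin (Fintype.card K + 1) → Submodule K W)
    (hsol : IsometrySolution U V) (hnontriv : ¬ TuplesEquiv U V)
    (n : ℕ) (hn : 1 < n)
    (hmaxV : (Finset.univ.sup fun i => Module.finrank K ↥(V i)) = n)
    (hmaxU : (Finset.univ.sup fun i => Module.finrank K ↥(U i)) = n) :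
    (Finset.univ.filter fun i => Module.finrank K ↥(V i) = n - 1).card =
      (Finset.univ.filter fun i => Module.finrank K ↥(U i) = n - 1).card ∧
    (Finset.univ.filter fun i => Module.finrank K ↥(V i) = n - 1).card ≤ 1 :=
  nontrivial_solution_card_X_eq_card_Y_general K W U V hsol hnontriv n hmaxV hmaxU
end

section
/- Let K be a finite field, let W be a finite-dimensional K-vector space, and let V_1, …, V_m, U_1, …, U_m ⊆ W be K-subspaces all containing a common subspace S. Then the equality ∑_{i=1}^m (1/|V_i|)·1_{V_i} = ∑_{i=1}^m (1/|U_i|)·1_{U_i} of real-valued functions on W holds if and only if the equality ∑_{i=1}^m (1/|V_i/S|)·1_{V_i/S} = ∑_{i=1}^m (1/|U_i/S|)·1_{U_i/S} of real-valued functions on the quotient space W/S holds, where V_i/S and U_i/S denote the images of V_i and U_i in W/S. -/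
open Finset
open scoped Classical

namespace Submodule

variable {R M : Type*} [Ring R] [AddCommGroup M] [Module R M] {S T : Submodule R M}

theorem mkQ_mem_map_mkQ_iff (h : S ≤ T) (w : M) : S.mkQ w ∈ T.map S.mkQ ↔ w ∈ T := by
  rw [← mem_comap, comap_map_mkQ, sup_eq_right.mpr h]

-- `S.mkQ` restricted to `T` has kernel `S` and image `T/S`.
theorem card_eq_card_mul_card_map_mkQ (h : S ≤ T) :
    Nat.card T = Nat.card S * Nat.card (T.map S.mkQ) := by
  let f := S.mkQ ∘ₗ T.subtype
  have hker : LinearMap.ker f = S.comap T.subtype := by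
    rw [LinearMap.ker_comp, ker_mkQ]
  have hrange : LinearMap.range f = T.map S.mkQ := by
    rw [LinearMap.range_comp, range_subtype]
  rw [card_eq_card_quotient_mul_card (LinearMap.ker f),
    Nat.card_congr f.quotKerEquivRange.toEquiv, hrange, hker,
    Nat.card_congr (comapSubtypeEquivOfLe h).toEquiv, mul_comm]

variable {𝕜 : Type*} [Field 𝕜] [CharZero 𝕜]

theorem inv_card_map_mkQ_mul_ite [Finite S] (h : S ≤ T) (w : M) :
    (Nat.card (T.map S.mkQ) : 𝕜)⁻¹ * (if S.mkQ w ∈ T.map S.mkQ then 1 else 0) =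
      Nat.card S * ((Nat.card T : 𝕜)⁻¹ * if w ∈ T then 1 else 0) := by
  have hS : (Nat.card S : 𝕜) ≠ 0 := Nat.cast_ne_zero.mpr Nat.card_pos.ne'
  rw [mkQ_mem_map_mkQ_iff h, card_eq_card_mul_card_map_mkQ h, Nat.cast_mul, mul_inv]
  split_ifs
  · field_simp
  · simp

theorem sum_inv_card_map_mkQ_mul_ite [Finite S] {ι : Type*} (s : Finset ι)
    {T : ι → Submodule R M} (hT : ∀ i, S ≤ T i) (w : M) :
    ∑ i ∈ s, (Nat.card ((T i).map S.mkQ) : 𝕜)⁻¹ *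
        (if S.mkQ w ∈ (T i).map S.mkQ then 1 else 0) =
      Nat.card S * ∑ i ∈ s, (Nat.card (T i) : 𝕜)⁻¹ * if w ∈ T i then 1 else 0 := by
  rw [mul_sum]
  exact sum_congr rfl fun i _ => inv_card_map_mkQ_mul_ite (hT i) w

end Submodule

/-- The isometry equation holds on `W` if and only if the corresponding equation for the
quotients by a common subspace `S` holds on `W ⧸ S`. -/
theorem isometry_equation_iff_quotient
    (K W : Type*) [Field K] [Fintype K] [AddCommGroup W] [Module K W]
    [FiniteDimensional K W]
    {m : ℕ} (S : Submodule K W) (U V : Fin m → Submodule K W)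
    (hV : ∀ i, S ≤ V i) (hU : ∀ i, S ≤ U i) :
    (∀ w : W,
      ∑ i, ((Nat.card ↥(V i) : ℝ))⁻¹ * (if w ∈ V i then 1 else 0) =
      ∑ i, ((Nat.card ↥(U i) : ℝ))⁻¹ * (if w ∈ U i then 1 else 0)) ↔
    (∀ x : W ⧸ S,
      ∑ i, ((Nat.card ↥((V i).map S.mkQ) : ℝ))⁻¹ * (if x ∈ (V i).map S.mkQ then 1 else 0) =
      ∑ i, ((Nat.card ↥((U i).map S.mkQ) : ℝ))⁻¹ * (if x ∈ (U i).map S.mkQ then 1 else 0)) := by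
  have : Finite W := Module.finite_of_finite K
  have hS : (Nat.card S : ℝ) ≠ 0 := Nat.cast_ne_zero.mpr Nat.card_pos.ne'
  simp only [S.mkQ_surjective.forall, Submodule.sum_inv_card_map_mkQ_mul_ite _ hV,
    Submodule.sum_inv_card_map_mkQ_mul_ite _ hU, mul_right_inj' hS]
end

section
/- Let K be a finite field with |K| = q, let W be a finite-dimensional K-vector space, and let (U,V) be a nontrivial solution of the isometry equation with tuples of length m = q+1 such that max_i dim_K V_i = max_i dim_K U_i = n > 1 and exactly one space in each tuple has dimension n−1. Then (U,V) is equivalent to a pair of Type B: there exist a subspace S ⊆ W, linearly independent vectors a, b, c ∈ W with S ∩ span{a,b,c} = {0}, an enumeration α_1, …, α_q of K, and permutations of the two tuples, after which V_m = S + span{a}, V_i = S + span{b, α_i a + c} for i ∈ {1,…,q}, U_m = S + span{b}, and U_i = S + span{a, α_i b + c} for i ∈ {1,…,q}. -/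
open Finset
open scoped Classical

/-!
Compare the multiplicities with which subspaces occur in `U` and in `V`, and let `M` be a subspace
of maximal dimension whose two multiplicities differ, say it occurs more often in `V`. Evaluating
the isometry equation at the points of `M` shows that `M` is covered by its intersections with
those `U j` that occur more often in `U`. A space over a field with `q` elements is not a union of
`q` proper subspaces, so these are all `q + 1` of the `U j`, and no `V i` equals a `U j`.

Each `V i` is the union of its intersections with the `U j` (and vice versa), and a space that is
the union of `q + 1` proper subspaces is a pencil: they are hyperplanes through one common subspace
of codimension `2`. For the `n`-dimensional `V i` and `U j` this gives `V x ≤ U j` (`j ≠ y`),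
`U y ≤ V i` (`i ≠ x`) and `S = V x ⊓ U y` of codimension `2`. With `a ∈ V x \ U y`,
`b ∈ U y \ V x` and `c` in some `V i ⊓ U j` outside `S`, each `t • a + c` lies in some `V i` with
`i ≠ x`, which is then `S ⊔ span {b, t • a + c}`, and distinct `t` give distinct `i`; symmetrically
for `U`.
-/

open Module Submodule

namespace IsometryEquation

section Covering

variable {K W : Type*} [Field K] [AddCommGroup W] [Module K W]

theorem eq_of_add_smul_mem {N : Submodule K W} {x y : W} (hx : x ∉ N) {s t : K}
    (hs : y + s • x ∈ N) (ht : y + t • x ∈ N) : s = t := by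
  by_contra hst
  have : (s - t) • x ∈ N := by simpa [sub_smul] using N.sub_mem hs ht
  exact hx ((smul_mem_iff N (sub_ne_zero.2 hst)).1 this)

variable [Fintype K]

theorem card_lt_card_of_covers (M : Submodule K W) (T : Finset (Submodule K W))
    (hlt : ∀ N ∈ T, N < M) (hcov : ∀ w ∈ M, ∃ N ∈ T, w ∈ N) : Fintype.card K < T.card := by
  induction T using Finset.induction_on with
  | empty =>
    obtain ⟨N, hN, -⟩ := hcov 0 M.zero_mem
    simp at hN
  | insert N T hN ih =>
    rw [card_insert_of_notMem hN, Nat.lt_succ_iff]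
    by_cases hT : ∀ w ∈ M, ∃ N' ∈ T, w ∈ N'
    · exact (ih (fun N' h => hlt N' (mem_insert_of_mem h)) hT).le
    push Not at hT
    obtain ⟨x, hxM, hxT⟩ := hT
    have hxN : x ∈ N := by
      obtain ⟨N', hN', hxN'⟩ := hcov x hxM
      rcases mem_insert.1 hN' with rfl | h
      · exact hxN'
      · exact absurd hxN' (hxT N' h)
    obtain ⟨y, hyM, hyN⟩ := SetLike.exists_of_lt (hlt N (mem_insert_self N T))
    have hline : ∀ t : K, ∃ N' ∈ T, y + t • x ∈ N' := by
      intro t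
      obtain ⟨N', hN', hmem⟩ := hcov _ (M.add_mem hyM (M.smul_mem t hxM))
      rcases mem_insert.1 hN' with rfl | h
      · exact absurd (by simpa using N'.sub_mem hmem (N'.smul_mem t hxN)) hyN
      · exact ⟨N', h, hmem⟩
    choose f hfT hf using hline
    exact card_le_card_of_injOn (s := univ) f (fun t _ => hfT t) fun s _ t _ hst =>
      eq_of_add_smul_mem (hxT (f s) (hfT s)) (hf s) (hst ▸ hf t)

theorem exists_two_ne (j : Fin (Fintype.card K + 1)) : ∃ k l, k ≠ j ∧ l ≠ j ∧ k ≠ l := by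
  have hq : 1 < Fintype.card K := Fintype.one_lt_card
  obtain ⟨k, hk, l, hl, hkl⟩ := one_lt_card.1 (show 1 < (univ.erase j).card by simp; omega)
  exact ⟨k, l, ne_of_mem_erase hk, ne_of_mem_erase hl, hkl⟩

end Covering

section Pencil

variable {K W : Type*} [Field K] [Fintype K] [AddCommGroup W] [Module K W]

structure IsProperCover (M : Submodule K W) (A : Fin (Fintype.card K + 1) → Submodule K W) :
    Prop where
  lt : ∀ j, A j < M
  covers : ∀ w ∈ M, ∃ j, w ∈ A j

namespace IsProperCover

variable {M : Submodule K W} {A : Fin (Fintype.card K + 1) → Submodule K W} (hA : IsProperCover M A)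
include hA

theorem exists_mem_forall_ne_notMem (j : Fin (Fintype.card K + 1)) :
    ∃ x ∈ A j, ∀ k, k ≠ j → x ∉ A k := by
  by_contra! h
  have hlt := card_lt_card_of_covers M ((univ.erase j).image A)
    (fun N hN => by obtain ⟨k, -, rfl⟩ := mem_image.1 hN; exact hA.lt k)
    (fun w hw => by
      obtain ⟨k, hk⟩ := hA.covers w hw
      rcases eq_or_ne k j with rfl | hkj
      · obtain ⟨l, hlk, hl⟩ := h w hk
        exact ⟨A l, mem_image_of_mem A (mem_erase.2 ⟨hlk, mem_univ l⟩), hl⟩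
      · exact ⟨A k, mem_image_of_mem A (mem_erase.2 ⟨hkj, mem_univ k⟩), hk⟩)
  have hle : ((univ.erase j).image A).card ≤ Fintype.card K := card_image_le.trans (by simp)
  omega

theorem exists_equiv_add_smul_mem {l : Fin (Fintype.card K + 1)} {x p : W} (hx : x ∈ A l)
    (hxk : ∀ k, k ≠ l → x ∉ A k) (hp : p ∈ M) (hpl : p ∉ A l) :
    ∃ g : K ≃ {k // k ≠ l}, ∀ t, p + t • x ∈ A (g t) := by
  have hline : ∀ t : K, ∃ k, k ≠ l ∧ p + t • x ∈ A k := by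
    intro t
    obtain ⟨k, hk⟩ := hA.covers _ (M.add_mem hp (M.smul_mem t ((hA.lt l).le hx)))
    refine ⟨k, ?_, hk⟩
    rintro rfl
    exact hpl (by simpa using (A k).sub_mem hk ((A k).smul_mem t hx))
  choose f hfl hf using hline
  have hinj : Function.Injective fun t => (⟨f t, hfl t⟩ : {k // k ≠ l}) := fun s t hst => by
    have hst : f s = f t := congrArg Subtype.val hst
    exact eq_of_add_smul_mem (hxk _ (hfl s)) (hf s) (hst ▸ hf t)
  refine ⟨Equiv.ofBijective _ ((Fintype.bijective_iff_injective_and_card _).2 ⟨hinj, ?_⟩),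
    fun t => hf t⟩
  simp [Fintype.card_subtype_compl]

theorem sup_eq {j k : Fin (Fintype.card K + 1)} (hjk : j ≠ k) : A j ⊔ A k = M := by
  refine le_antisymm (sup_le (hA.lt j).le (hA.lt k).le) fun z hz => ?_
  by_cases hzj : z ∈ A j
  · exact mem_sup_left hzj
  obtain ⟨x, hx, hxk⟩ := hA.exists_mem_forall_ne_notMem j
  obtain ⟨g, hg⟩ := hA.exists_equiv_add_smul_mem hx hxk hz hzj
  set t := g.symm ⟨k, hjk.symm⟩
  have hzt : z + t • x ∈ A k := by simpa [t] using hg t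
  simpa using sub_mem (mem_sup_right hzt) (mem_sup_left (smul_mem _ t hx))

theorem inf_le {j k : Fin (Fintype.card K + 1)} (hjk : j ≠ k) (l : Fin (Fintype.card K + 1)) :
    A j ⊓ A k ≤ A l := by
  intro c hc
  obtain ⟨hcj, hck⟩ := mem_inf.1 hc
  by_contra hcl
  obtain ⟨x, hx, hxl⟩ := hA.exists_mem_forall_ne_notMem l
  obtain ⟨g, hg⟩ := hA.exists_equiv_add_smul_mem hx hxl ((hA.lt j).le hcj) hcl
  have hzero : ∀ i (hi : i ≠ l), c ∈ A i → g.symm ⟨i, hi⟩ = 0 := fun i hi hci =>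
    eq_of_add_smul_mem (hxl i hi) (by simpa using hg (g.symm ⟨i, hi⟩)) (by simpa using hci)
  have hjl : j ≠ l := fun h => hcl (h ▸ hcj)
  have hkl : k ≠ l := fun h => hcl (h ▸ hck)
  exact hjk (congrArg Subtype.val
    (g.symm.injective ((hzero j hjl hcj).trans (hzero k hkl hck).symm)))

/- Replacing `A j` by `H` gives another proper cover; in both covers `A k` meets the `j`-th member
inside `A k ⊓ A l` and together with it spans `M`, so modularity forces `A j = H`. -/
theorem eq_of_le_of_lt {j : Fin (Fintype.card K + 1)} {H : Submodule K W} (hjH : A j ≤ H)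
    (hH : H < M) : A j = H := by
  obtain ⟨k, l, hkj, hlj, hkl⟩ := exists_two_ne j
  have hB : IsProperCover M (Function.update A j H) := by
    refine ⟨fun i => ?_, fun w hw => ?_⟩
    · rcases eq_or_ne i j with rfl | hij
      · simpa using hH
      · simpa [hij] using hA.lt i
    · obtain ⟨i, hi⟩ := hA.covers w hw
      rcases eq_or_ne i j with rfl | hij
      · exact ⟨i, by simpa using hjH hi⟩
      · exact ⟨i, by simpa [hij] using hi⟩
  have hHk : H ⊓ A k ≤ A l := by simpa [hkj, hlj] using hB.inf_le hkj.symm l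
  refine eq_of_le_of_inf_le_of_sup_le hjH
    (le_inf ((le_inf inf_le_right hHk).trans (hA.inf_le hkl j)) inf_le_right) ?_
  rw [hA.sup_eq hkj.symm]
  exact sup_le hH.le (hA.lt k).le

variable [FiniteDimensional K W]

theorem finrank_add_one (j : Fin (Fintype.card K + 1)) : finrank K (A j) + 1 = finrank K M := by
  obtain ⟨w, hwM, hwj⟩ := SetLike.exists_of_lt (hA.lt j)
  have hle : A j ⊔ span K {w} ≤ M := sup_le (hA.lt j).le ((span_singleton_le_iff_mem _ _).2 hwM)
  have heq : A j ⊔ span K {w} = M := by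
    by_contra hne
    have := hA.eq_of_le_of_lt le_sup_left (lt_of_le_of_ne hle hne)
    exact hwj (this ▸ mem_sup_right (mem_span_singleton_self w))
  rw [← heq, finrank_sup_span_singleton hwj]

theorem finrank_inf_add_two {j k : Fin (Fintype.card K + 1)} (hjk : j ≠ k) :
    finrank K ↥(A j ⊓ A k) + 2 = finrank K M := by
  have := Submodule.finrank_sup_add_finrank_inf_eq (A j) (A k)
  rw [hA.sup_eq hjk] at this
  have := hA.finrank_add_one j
  have := hA.finrank_add_one k
  omega

end IsProperCover

end Pencil

section LinearAlgebra

variable {K W : Type*} [Field K] [AddCommGroup W] [Module K W] [FiniteDimensional K W]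

theorem eq_sup_span_singleton {S H : Submodule K W} {v : W} (hSH : S ≤ H) (hvH : v ∈ H)
    (hv : v ∉ S) (hH : finrank K H = finrank K S + 1) : H = S ⊔ span K {v} :=
  (eq_of_le_of_finrank_le (sup_le hSH ((span_singleton_le_iff_mem v H).2 hvH))
    (by rw [finrank_sup_span_singleton hv, hH])).symm

theorem linearIndependent_and_inf_span_eq_bot {S : Submodule K W} {a b c : W} (ha : a ∉ S)
    (hb : b ∉ S ⊔ span K {a}) (hc : c ∉ S ⊔ span K {a, b}) :
    LinearIndependent K ![a, b, c] ∧ S ⊓ span K {a, b, c} = ⊥ := by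
  have hrange : Set.range ![a, b, c] = {a, b, c} := by
    rw [Matrix.range_cons, Matrix.range_cons, Matrix.range_cons, Matrix.range_empty]
    simp only [Set.union_empty, Set.singleton_union]
  have hc' : c ∉ S ⊔ span K {a} ⊔ span K {b} := by rwa [sup_assoc, ← span_insert]
  have hsup : finrank K ↥(S ⊔ span K {a, b, c}) = finrank K S + 3 := by
    rw [span_insert, span_insert, ← sup_assoc, ← sup_assoc, finrank_sup_span_singleton hc',
      finrank_sup_span_singleton hb, finrank_sup_span_singleton ha]
  have hdim := Submodule.finrank_sup_add_finrank_inf_eq S (span K {a, b, c})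
  have hle : finrank K (span K {a, b, c}) ≤ 3 := by
    have := finrank_range_le_card (R := K) ![a, b, c]
    rwa [hrange, Fintype.card_fin] at this
  refine ⟨linearIndependent_iff_card_eq_finrank_span.2 ?_, finrank_eq_zero.1 (by omega)⟩
  rw [hrange, Set.finrank, Fintype.card_fin]
  omega

end LinearAlgebra

theorem exists_perm_last_castSucc {q : ℕ} {x : Fin (q + 1)} {f : Fin q → Fin (q + 1)}
    (hf : Function.Injective f) (hfx : ∀ i, f i ≠ x) :
    ∃ σ : Equiv.Perm (Fin (q + 1)), σ (Fin.last q) = x ∧ ∀ i, σ i.castSucc = f i := by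
  let g : Fin (q + 1) → Fin (q + 1) := Fin.lastCases x f
  have hg : Function.Injective g := by
    intro i j hij
    cases i using Fin.lastCases <;> cases j using Fin.lastCases <;>
      simp_all [g, hf.eq_iff, (hfx _).symm]
  exact ⟨Equiv.ofBijective g hg.bijective_of_finite, by simp [g], by simp [g]⟩

section Weight

variable {K W : Type*} [Field K] [AddCommGroup W] [Module K W] {m : ℕ}

noncomputable def weight (V : Fin m → Submodule K W) (w : W) : ℝ :=
  ∑ i, ((Nat.card ↥(V i) : ℝ))⁻¹ * (if w ∈ V i then 1 else 0)

noncomputable def mult (V : Fin m → Submodule K W) (A : Submodule K W) : ℕ := #{i | V i = A}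

theorem exists_eq_of_mult_pos {V : Fin m → Submodule K W} {A : Submodule K W}
    (h : 0 < mult V A) : ∃ i, V i = A := by
  obtain ⟨i, hi⟩ := card_pos.1 h
  exact ⟨i, (mem_filter.1 hi).2⟩

theorem weight_eq_sum_mult (V : Fin m → Submodule K W) {E : Finset (Submodule K W)}
    (hE : ∀ i, V i ∈ E) (w : W) :
    weight V w = ∑ A ∈ E, (mult V A : ℝ) * ((Nat.card A : ℝ)⁻¹ * if w ∈ A then 1 else 0) := by
  rw [weight, ← sum_fiberwise_of_maps_to fun i _ => hE i]
  refine sum_congr rfl fun A _ => ?_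
  rw [sum_congr rfl fun i hi => by rw [(mem_filter.1 hi).2], sum_const, nsmul_eq_mul, mult]

theorem tuplesEquiv_of_mult_eq {U V : Fin m → Submodule K W} (h : ∀ A, mult V A = mult U A) :
    TuplesEquiv U V := by
  have e : ∀ A, {i // V i = A} ≃ {i // U i = A} := fun A =>
    Fintype.equivOfCardEq (by rw [Fintype.card_subtype, Fintype.card_subtype]; exact h A)
  refine ⟨(Equiv.sigmaFiberEquiv V).symm.trans
    ((Equiv.sigmaCongrRight e).trans (Equiv.sigmaFiberEquiv U)), fun i => ?_⟩
  exact (e (V i) ⟨i, rfl⟩).2.symm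

variable [Finite W]

theorem weight_pos_iff (V : Fin m → Submodule K W) (w : W) :
    0 < weight V w ↔ ∃ i, w ∈ V i := by
  rw [weight, sum_pos_iff_of_nonneg fun i _ => by positivity]
  simp only [mem_univ, true_and]
  refine exists_congr fun i => ?_
  split_ifs with h <;> simp [h, Nat.card_pos]

end Weight

end IsometryEquation

open IsometryEquation

namespace IsometrySolution

section

variable {K W : Type*} [Field K] [AddCommGroup W] [Module K W] {m : ℕ}
  {U V : Fin m → Submodule K W} (hsol : IsometrySolution U V)
include hsol

theorem symm : IsometrySolution V U := fun w => (hsol w).symm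

theorem weight_eq (w : W) : weight V w = weight U w := hsol w

variable [Finite W]

theorem exists_mem {i : Fin m} {w : W} (hw : w ∈ V i) : ∃ j, w ∈ U j :=
  (weight_pos_iff U w).1 (hsol.weight_eq w ▸ (weight_pos_iff V w).2 ⟨i, hw⟩)

theorem exists_mult_lt_of_mem {M : Submodule K W} (hM : mult U M < mult V M) {w : W}
    (hw : w ∈ M) : ∃ j, w ∈ U j ∧ mult V (U j) < mult U (U j) := by
  by_contra! h
  have hle : ∀ A : Submodule K W, w ∈ A → mult U A ≤ mult V A := fun A hwA => by
    rcases Nat.eq_zero_or_pos (mult U A) with h0 | hpos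
    · simp [h0]
    · obtain ⟨j, rfl⟩ := exists_eq_of_mult_pos hpos
      exact h j hwA
  obtain ⟨i, rfl⟩ := exists_eq_of_mult_pos (Nat.zero_lt_of_lt hM)
  set E := univ.image V ∪ univ.image U
  have hlt : weight U w < weight V w := by
    rw [weight_eq_sum_mult U (E := E) (by simp [E]) w,
      weight_eq_sum_mult V (E := E) (by simp [E]) w]
    refine sum_lt_sum (fun A _ => ?_) ⟨V i, by simp [E], ?_⟩
    · by_cases hwA : w ∈ A
      · exact mul_le_mul_of_nonneg_right (by exact_mod_cast hle A hwA) (by positivity)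
      · simp [hwA]
    · exact mul_lt_mul_of_pos_right (by exact_mod_cast hM) (by simp [hw, Nat.card_pos])
  exact hlt.ne' (hsol.weight_eq w)

end

section

variable {K W : Type*} [Field K] [Fintype K] [AddCommGroup W] [Module K W] [Finite W]
  {U V : Fin (Fintype.card K + 1) → Submodule K W} (hsol : IsometrySolution U V)
include hsol

theorem ne_of_mult_lt {M : Submodule K W} (hM : mult U M < mult V M)
    (hmax : ∀ A, mult V A ≠ mult U A → finrank K A ≤ finrank K M)
    (i j : Fin (Fintype.card K + 1)) : V i ≠ U j := by
  set J := univ.filter fun j => mult V (U j) < mult U (U j)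
  have hproper : ∀ j ∈ J, M ⊓ U j < M := fun j hj => inf_lt_left.2 fun hMU => by
    have hJ := (mem_filter.1 hj).2
    have hMU : M = U j := eq_of_le_of_finrank_le hMU (hmax _ hJ.ne)
    exact hJ.not_gt (hMU ▸ hM)
  have hcover := card_lt_card_of_covers M (J.image fun j => M ⊓ U j)
    (by simpa using hproper)
    fun w hw => by
      obtain ⟨j, hwj, hj⟩ := hsol.exists_mult_lt_of_mem hM hw
      exact ⟨M ⊓ U j, mem_image_of_mem _ (mem_filter.2 ⟨mem_univ j, hj⟩), mem_inf.2 ⟨hw, hwj⟩⟩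
  have hJ : J.card ≤ Fintype.card K + 1 := card_le_univ J |>.trans (by simp)
  have himage := card_image_le (s := J) (f := fun j => M ⊓ U j)
  have hJuniv : J = univ := eq_univ_of_card J (by simp only [Fintype.card_fin]; omega)
  have hinj : Set.InjOn (fun j => M ⊓ U j) J := card_image_iff.1 (by omega)
  have hmult : mult U (U j) ≤ 1 := card_le_one.2 fun a ha b hb => by
    simp only [mem_filter] at ha hb
    exact hinj (by simp [hJuniv]) (by simp [hJuniv]) (by simp only [ha.2, hb.2])
  have hj : j ∈ J := hJuniv ▸ mem_univ j
  intro hVU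
  have hpos : 0 < mult V (U j) := card_pos.2 ⟨i, mem_filter.2 ⟨mem_univ i, hVU⟩⟩
  have := (mem_filter.1 hj).2
  omega

theorem ne_of_not_tuplesEquiv_s14 (hnontriv : ¬ TuplesEquiv U V) (i j : Fin (Fintype.card K + 1)) :
    V i ≠ U j := by
  obtain ⟨A, hA⟩ : ∃ A, mult V A ≠ mult U A := by
    by_contra! h
    exact hnontriv (tuplesEquiv_of_mult_eq h)
  set D := (univ.image V ∪ univ.image U).filter fun A => mult V A ≠ mult U A
  have hmemD : ∀ A, mult V A ≠ mult U A → A ∈ D := fun A hA => by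
    refine mem_filter.2 ⟨?_, hA⟩
    rcases Nat.eq_zero_or_pos (mult V A) with h0 | hpos
    · obtain ⟨j, rfl⟩ := exists_eq_of_mult_pos (by omega : 0 < mult U A)
      simp
    · obtain ⟨i, rfl⟩ := exists_eq_of_mult_pos hpos
      simp
  obtain ⟨M, hMD, hMmax⟩ := exists_max_image D (fun A => finrank K A) ⟨A, hmemD A hA⟩
  have hmax : ∀ A, mult V A ≠ mult U A → finrank K A ≤ finrank K M :=
    fun A h => hMmax A (hmemD A h)
  rcases (mem_filter.1 hMD).2.lt_or_gt with hlt | hgt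
  · exact fun h => hsol.symm.ne_of_mult_lt hlt (fun A h' => hmax A (Ne.symm h')) j i h.symm
  · exact hsol.ne_of_mult_lt hgt hmax i j

end

end IsometrySolution

namespace IsometryEquation

variable {K W : Type*} [Field K] [Fintype K] [AddCommGroup W] [Module K W]

section

variable [FiniteDimensional K W]

theorem finrank_eq_of_ne_of_covers {U V : Fin (Fintype.card K + 1) → Submodule K W} {n : ℕ}
    {x : Fin (Fintype.card K + 1)} (hne : ∀ i j, V i ≠ U j)
    (hcov : ∀ j, ∀ w ∈ U j, ∃ i, w ∈ V i)
    (hmaxV : (univ.sup fun i => finrank K ↥(V i)) = n)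
    (hmaxU : (univ.sup fun i => finrank K ↥(U i)) = n)
    (hx : (univ.filter fun i => finrank K ↥(V i) = n - 1) = {x}) :
    finrank K (V x) + 1 = n ∧ ∀ i, i ≠ x → finrank K (V i) = n := by
  obtain ⟨j, -, hj⟩ := exists_mem_eq_sup univ univ_nonempty fun j => finrank K (U j)
  have hle : ∀ i, finrank K (V i) ≤ n := fun i =>
    hmaxV ▸ le_sup (f := fun i => finrank K (V i)) (mem_univ i)
  have hcover : IsProperCover (U j) fun i => U j ⊓ V i :=
    ⟨fun i => inf_lt_left.2 fun hUV => hne i j (eq_of_le_of_finrank_le hUV (by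
      have := hle i; omega)).symm,
     fun w hw => (hcov j w hw).imp fun _ hi => mem_inf.2 ⟨hw, hi⟩⟩
  have hge : ∀ i, n ≤ finrank K (V i) + 1 := fun i => by
    have := hcover.finrank_add_one i
    have := finrank_mono (inf_le_right : U j ⊓ V i ≤ V i)
    omega
  have hmem : ∀ i, finrank K (V i) = n - 1 ↔ i = x := by simpa [Finset.ext_iff] using hx
  refine ⟨?_, fun i hi => ?_⟩
  · have := (hmem x).2 rfl
    have := hcover.finrank_add_one x
    omega
  · have := (hmem i).not.2 hi
    have := hge i
    have := hle i
    omega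

end

structure Setup (U V : Fin (Fintype.card K + 1) → Submodule K W) (n : ℕ)
    (x y : Fin (Fintype.card K + 1)) : Prop where
  finrank_V_x : finrank K (V x) + 1 = n
  finrank_V : ∀ i, i ≠ x → finrank K (V i) = n
  finrank_U_y : finrank K (U y) + 1 = n
  finrank_U : ∀ j, j ≠ y → finrank K (U j) = n
  ne : ∀ i j, V i ≠ U j
  exists_mem_U : ∀ i, ∀ w ∈ V i, ∃ j, w ∈ U j
  exists_mem_V : ∀ j, ∀ w ∈ U j, ∃ i, w ∈ V i

namespace Setup

variable {U V : Fin (Fintype.card K + 1) → Submodule K W} {n : ℕ}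
  {x y : Fin (Fintype.card K + 1)} (h : Setup U V n x y)
include h

theorem symm : Setup V U n y x :=
  ⟨h.3, h.4, h.1, h.2, fun i j e => h.ne j i e.symm, h.7, h.6⟩

theorem finrank_V_le (i : Fin (Fintype.card K + 1)) : finrank K (V i) ≤ n := by
  rcases eq_or_ne i x with rfl | hi
  · have := h.finrank_V_x
    omega
  · exact (h.finrank_V i hi).le

variable [FiniteDimensional K W]

theorem not_V_x_le : ¬ V x ≤ U y := fun hle =>
  h.ne x y (eq_of_le_of_finrank_le hle (by have := h.finrank_V_x; have := h.finrank_U_y; omega))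

theorem isProperCover {i : Fin (Fintype.card K + 1)} (hi : i ≠ x) :
    IsProperCover (V i) fun j => V i ⊓ U j where
  lt j := inf_lt_left.2 fun hle => h.ne i j <| eq_of_le_of_finrank_le hle <| by
    rw [h.finrank_V i hi]
    exact h.symm.finrank_V_le j
  covers w hw := (h.exists_mem_U i w hw).imp fun _ hj => mem_inf.2 ⟨hw, hj⟩

theorem U_y_le {i : Fin (Fintype.card K + 1)} (hi : i ≠ x) : U y ≤ V i := by
  have := (h.isProperCover hi).finrank_add_one y
  rw [h.finrank_V i hi, ← h.finrank_U_y, Nat.add_right_cancel_iff] at this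
  exact inf_eq_right.1 (eq_of_le_of_finrank_le inf_le_right this.ge)

theorem inf_inf_le {i : Fin (Fintype.card K + 1)} (hi : i ≠ x) {j k : Fin (Fintype.card K + 1)}
    (hjk : j ≠ k) (l : Fin (Fintype.card K + 1)) : V i ⊓ U j ⊓ U k ≤ U l := by
  rw [inf_assoc, inf_inf_distrib_left]
  exact ((h.isProperCover hi).inf_le hjk l).trans inf_le_right

theorem finrank_inf_inf {i : Fin (Fintype.card K + 1)} (hi : i ≠ x)
    {j k : Fin (Fintype.card K + 1)} (hjk : j ≠ k) : finrank K ↥(V i ⊓ U j ⊓ U k) + 2 = n := by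
  rw [inf_assoc, inf_inf_distrib_left, ← h.finrank_V i hi]
  exact (h.isProperCover hi).finrank_inf_add_two hjk

theorem notMem_V {a : W} (ha : a ∈ V x) (haU : a ∉ U y) {i : Fin (Fintype.card K + 1)}
    (hi : i ≠ x) : a ∉ V i := fun hai => by
  obtain ⟨j, k, hjy, hky, hjk⟩ := exists_two_ne y
  exact haU (h.inf_inf_le hi hjk y
    (mem_inf.2 ⟨mem_inf.2 ⟨hai, h.symm.U_y_le hjy ha⟩, h.symm.U_y_le hky ha⟩))

theorem inf_le_U (j : Fin (Fintype.card K + 1)) : V x ⊓ U y ≤ U j := by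
  rcases eq_or_ne j y with rfl | hjy
  · exact inf_le_right
  · exact inf_le_left.trans (h.symm.U_y_le hjy)

theorem finrank_inf : finrank K ↥(V x ⊓ U y) + 2 = n := by
  obtain ⟨i, i', hi, hi', hii'⟩ := exists_two_ne x
  obtain ⟨j, -, hj, -, -⟩ := exists_two_ne y
  have hC := h.finrank_inf_inf hi hj.symm
  have hCx : V i ⊓ U y ⊓ U j ≤ V x := by
    refine le_trans (le_inf (le_inf inf_le_right (inf_le_left.trans inf_le_left)) ?_)
      (h.symm.inf_inf_le hj hii' x)
    exact (inf_le_left.trans inf_le_right).trans (h.U_y_le hi')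
  have hle := finrank_mono (le_inf hCx (inf_le_left.trans inf_le_right))
  have hlt := finrank_lt_finrank_of_lt (inf_lt_left.2 h.not_V_x_le)
  have := h.finrank_V_x
  omega

theorem inf_le_V (i : Fin (Fintype.card K + 1)) : V x ⊓ U y ≤ V i :=
  inf_comm (U y) (V x) ▸ h.symm.inf_le_U i

theorem notMem_sup_span_pair {a b c : W} (ha : a ∈ V x) (haU : a ∉ U y) (hb : b ∈ U y)
    (hbV : b ∉ V x) {i₀ j₀ : Fin (Fintype.card K + 1)} (hi₀ : i₀ ≠ x) (hj₀ : j₀ ≠ y)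
    (hc : c ∈ V i₀ ⊓ U j₀) (hcS : c ∉ V x ⊓ U y) : c ∉ V x ⊓ U y ⊔ span K {a, b} := by
  intro hmem
  obtain ⟨s, hs, z, hz, rfl⟩ := mem_sup.1 hmem
  obtain ⟨k, l, rfl⟩ := mem_span_pair.1 hz
  obtain ⟨hcV, hcU⟩ := mem_inf.1 hc
  have hk : k = 0 := by
    by_contra hk
    refine h.notMem_V ha haU hi₀ ((smul_mem_iff _ hk).1 ?_)
    simpa using (V i₀).sub_mem ((V i₀).sub_mem hcV (h.inf_le_V i₀ hs))
      ((V i₀).smul_mem l (h.U_y_le hi₀ hb))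
  have hl : l = 0 := by
    by_contra hl
    refine h.symm.notMem_V hb hbV hj₀ ((smul_mem_iff _ hl).1 ?_)
    simpa [hk] using (U j₀).sub_mem hcU (h.inf_le_U j₀ hs)
  exact hcS (by simpa [hk, hl] using hs)

theorem exists_index_V {S : Submodule K W} {a b c : W} (hSV : ∀ i, S ≤ V i)
    (hVx : V x = S ⊔ span K {a}) (haU : a ∉ U y) (hUy : U y = S ⊔ span K {b})
    (hc : c ∉ S ⊔ span K {a, b}) {j₀ : Fin (Fintype.card K + 1)} (hj₀ : j₀ ≠ y)
    (hcU : c ∈ U j₀) :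
    ∃ Γ : K → Fin (Fintype.card K + 1), Function.Injective Γ ∧ (∀ t, Γ t ≠ x) ∧
      ∀ t, V (Γ t) = S ⊔ span K {b, t • a + c} := by
  have ha : a ∈ V x := hVx ▸ mem_sup_right (mem_span_singleton_self a)
  have hb : b ∈ U y := hUy ▸ mem_sup_right (mem_span_singleton_self b)
  set P := S ⊔ span K {a, b}
  have hVP : V x ≤ P := hVx ▸ sup_le_sup_left (span_mono (by simp)) S
  have hUP : U y ≤ P := hUy ▸ sup_le_sup_left (span_mono (by simp)) S
  have hnotP : ∀ t : K, t • a + c ∉ P := fun t hmem =>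
    hc (by simpa using P.sub_mem hmem (P.smul_mem t (hVP ha)))
  have hexists : ∀ t : K, ∃ i, i ≠ x ∧ t • a + c ∈ V i := fun t => by
    obtain ⟨i, hi⟩ := h.exists_mem_V j₀ _
      ((U j₀).add_mem ((U j₀).smul_mem t (h.symm.U_y_le hj₀ ha)) hcU)
    exact ⟨i, fun hix => hnotP t (hVP (hix ▸ hi)), hi⟩
  choose Γ hΓx hΓ using hexists
  have hV : ∀ t, V (Γ t) = S ⊔ span K {b, t • a + c} := fun t => by
    have hle : S ⊔ span K {b, t • a + c} ≤ V (Γ t) := sup_le (hSV _) (span_le.2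
      (by simp [Set.insert_subset_iff, h.U_y_le (hΓx t) hb, hΓ t]))
    refine (eq_of_le_of_finrank_le hle ?_).symm
    rw [span_insert, ← sup_assoc, ← hUy, finrank_sup_span_singleton fun hm => hnotP t (hUP hm),
      h.finrank_U_y, h.finrank_V _ (hΓx t)]
  refine ⟨Γ, fun t t' htt' => ?_, hΓx, hV⟩
  by_contra hne
  have hmem := (V (Γ t)).sub_mem (hΓ t) (htt' ▸ hΓ t')
  refine h.notMem_V ha haU (hΓx t) ((smul_mem_iff _ (sub_ne_zero.2 hne)).1 ?_)
  simpa [sub_smul] using hmem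

theorem exists_typeB :
    ∃ (σ τ : Equiv.Perm (Fin (Fintype.card K + 1))) (S : Submodule K W) (a b c : W),
      LinearIndependent K ![a, b, c] ∧
      S ⊓ span K {a, b, c} = ⊥ ∧
      ∃ α : Fin (Fintype.card K) → K, Function.Bijective α ∧
        V (σ (Fin.last (Fintype.card K))) = S ⊔ span K {a} ∧
        (∀ i : Fin (Fintype.card K), V (σ i.castSucc) = S ⊔ span K {b, α i • a + c}) ∧
        U (τ (Fin.last (Fintype.card K))) = S ⊔ span K {b} ∧
        (∀ i : Fin (Fintype.card K), U (τ i.castSucc) = S ⊔ span K {a, α i • b + c}) := by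
  obtain ⟨i₀, -, hi₀, -, -⟩ := exists_two_ne x
  obtain ⟨j₀, -, hj₀, -, -⟩ := exists_two_ne y
  obtain ⟨a, ha, haU⟩ := SetLike.not_le_iff_exists.1 h.not_V_x_le
  obtain ⟨b, hb, hbV⟩ := SetLike.not_le_iff_exists.1 h.symm.not_V_x_le
  have haS : a ∉ V x ⊓ U y := fun has => haU (mem_inf.1 has).2
  have hS := h.finrank_inf
  have hVx : V x = V x ⊓ U y ⊔ span K {a} :=
    eq_sup_span_singleton inf_le_left ha haS (by have := h.finrank_V_x; omega)
  have hUy : U y = V x ⊓ U y ⊔ span K {b} :=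
    eq_sup_span_singleton inf_le_right hb (fun hbs => hbV (mem_inf.1 hbs).1)
      (by have := h.finrank_U_y; omega)
  obtain ⟨c, hc, hcS⟩ := SetLike.exists_of_lt <| lt_of_le_of_ne (le_inf (h.inf_le_V i₀)
    (h.inf_le_U j₀)) fun hS' => by
      have := (h.isProperCover hi₀).finrank_add_one j₀
      rw [← hS', h.finrank_V i₀ hi₀] at this
      omega
  have hcP := h.notMem_sup_span_pair ha haU hb hbV hi₀ hj₀ hc hcS
  obtain ⟨Γ, hΓ, hΓx, hVΓ⟩ := h.exists_index_V h.inf_le_V hVx haU hUy hcP hj₀ (mem_inf.1 hc).2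
  obtain ⟨Δ, hΔ, hΔy, hUΔ⟩ := h.symm.exists_index_V h.inf_le_U hUy hbV hVx
    (by rwa [Set.pair_comm]) hi₀ (mem_inf.1 hc).1
  let κ := (Fintype.equivFin K).symm
  obtain ⟨σ, hσx, hσ⟩ := exists_perm_last_castSucc (hΓ.comp κ.injective) fun i => hΓx (κ i)
  obtain ⟨τ, hτy, hτ⟩ := exists_perm_last_castSucc (hΔ.comp κ.injective) fun i => hΔy (κ i)
  obtain ⟨hli, hbot⟩ := linearIndependent_and_inf_span_eq_bot haS (hVx ▸ hbV) hcP
  exact ⟨σ, τ, V x ⊓ U y, a, b, c, hli, hbot, κ, κ.bijective, hσx ▸ hVx,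
    fun i => (hσ i).symm ▸ hVΓ (κ i), hτy ▸ hUy, fun i => (hτ i).symm ▸ hUΔ (κ i)⟩

end Setup

end IsometryEquation

theorem nontrivial_solution_is_typeB_general
    (K W : Type*) [Field K] [Fintype K] [AddCommGroup W] [Module K W]
    [FiniteDimensional K W]
    (U V : Fin (Fintype.card K + 1) → Submodule K W)
    (hsol : IsometrySolution U V) (hnontriv : ¬ TuplesEquiv U V)
    (n : ℕ)
    (hmaxV : (Finset.univ.sup fun i => Module.finrank K ↥(V i)) = n)
    (hmaxU : (Finset.univ.sup fun i => Module.finrank K ↥(U i)) = n)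
    (hX : (Finset.univ.filter fun i => Module.finrank K ↥(V i) = n - 1).card = 1)
    (hY : (Finset.univ.filter fun i => Module.finrank K ↥(U i) = n - 1).card = 1) :
    ∃ (σ τ : Equiv.Perm (Fin (Fintype.card K + 1))) (S : Submodule K W) (a b c : W),
      LinearIndependent K ![a, b, c] ∧
      S ⊓ Submodule.span K {a, b, c} = ⊥ ∧
      ∃ α : Fin (Fintype.card K) → K, Function.Bijective α ∧
        V (σ (Fin.last (Fintype.card K))) = S ⊔ Submodule.span K {a} ∧
        (∀ i : Fin (Fintype.card K),
          V (σ i.castSucc) = S ⊔ Submodule.span K {b, α i • a + c}) ∧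
        U (τ (Fin.last (Fintype.card K))) = S ⊔ Submodule.span K {b} ∧
        (∀ i : Fin (Fintype.card K),
          U (τ i.castSucc) = S ⊔ Submodule.span K {a, α i • b + c}) := by
  have : Finite W := Module.finite_of_finite K
  have hne := hsol.ne_of_not_tuplesEquiv_s14 hnontriv
  obtain ⟨x, hx⟩ := card_eq_one.1 hX
  obtain ⟨y, hy⟩ := card_eq_one.1 hY
  have hcovV : ∀ i, ∀ w ∈ V i, ∃ j, w ∈ U j := fun _ _ => hsol.exists_mem
  have hcovU : ∀ j, ∀ w ∈ U j, ∃ i, w ∈ V i := fun _ _ => hsol.symm.exists_mem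
  obtain ⟨hVx, hV⟩ := finrank_eq_of_ne_of_covers hne hcovU hmaxV hmaxU hx
  obtain ⟨hUy, hU⟩ := finrank_eq_of_ne_of_covers (fun i j h => hne j i h.symm) hcovV hmaxU hmaxV hy
  exact Setup.exists_typeB ⟨hVx, hV, hUy, hU, hne, hcovV, hcovU⟩

/-- A nontrivial minimal solution with equal maximal dimensions `n > 1` in which exactly one
space of each tuple has dimension `n - 1` is equivalent to a pair of Type B. -/
theorem nontrivial_solution_is_typeB
    (K W : Type*) [Field K] [Fintype K] [AddCommGroup W] [Module K W]
    [FiniteDimensional K W]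
    (U V : Fin (Fintype.card K + 1) → Submodule K W)
    (hsol : IsometrySolution U V) (hnontriv : ¬ TuplesEquiv U V)
    (n : ℕ) (hn : 1 < n)
    (hmaxV : (Finset.univ.sup fun i => Module.finrank K ↥(V i)) = n)
    (hmaxU : (Finset.univ.sup fun i => Module.finrank K ↥(U i)) = n)
    (hX : (Finset.univ.filter fun i => Module.finrank K ↥(V i) = n - 1).card = 1)
    (hY : (Finset.univ.filter fun i => Module.finrank K ↥(U i) = n - 1).card = 1) :
    ∃ (σ τ : Equiv.Perm (Fin (Fintype.card K + 1))) (S : Submodule K W) (a b c : W),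
      LinearIndependent K ![a, b, c] ∧
      S ⊓ Submodule.span K {a, b, c} = ⊥ ∧
      ∃ α : Fin (Fintype.card K) → K, Function.Bijective α ∧
        V (σ (Fin.last (Fintype.card K))) = S ⊔ Submodule.span K {a} ∧
        (∀ i : Fin (Fintype.card K),
          V (σ i.castSucc) = S ⊔ Submodule.span K {b, α i • a + c}) ∧
        U (τ (Fin.last (Fintype.card K))) = S ⊔ Submodule.span K {b} ∧
        (∀ i : Fin (Fintype.card K),
          U (τ i.castSucc) = S ⊔ Submodule.span K {a, α i • b + c}) :=
  nontrivial_solution_is_typeB_general K W U V hsol hnontriv n hmaxV hmaxU hX hY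
end

section
/- Let K be a finite field with |K| = q and let W be a finite-dimensional K-vector space. Let (U,V) be a pair of tuples of length m = q+1 of Type C: there exist a subspace S ⊆ W, linearly independent vectors a, b, c, d ∈ W with S ∩ span{a,b,c,d} = {0}, and an enumeration [α_1 : β_1], …, [α_m : β_m] of the q+1 points of the projective line over K, such that V_i = S + span{α_i a + β_i b, α_i c + β_i d} and U_i = S + span{α_i a + β_i c, α_i b + β_i d} for all i ∈ {1,…,m}. Then (U,V) is a nontrivial solution of the isometry equation and all the spaces V_1, …, V_m, U_1, …, U_m have the same dimension dim_K S + 2. -/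
open Finset
open scoped Classical

/-!
Identify `span {a, b, c, d}` with the `2 × 2` matrices over `K` through
`M ↦ M₀₀ a + M₀₁ b + M₁₀ c + M₁₁ d`. Modulo `S`, a vector with matrix `M` lies in `V i` iff
every row of `M` lies on the line `[α i : β i]`, and in `U i` iff every column does. As the
points `[α i : β i]` enumerate the projective line, the number of lines containing a subspace
of `K²` depends only on its dimension (`q + 1`, `1`, `0` for dimension `0`, `1`, `2`), and row
rank equals column rank; so every `w` lies in as many `V i` as `U i`. All the spaces have
`q ^ (dim S + 2)` elements, which gives the isometry equation. It is nontrivial because `V 0`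
contains the matrices `u ⊗ (α 0, β 0)` for all `u`, whose columns fill `K²`.
-/

open Module Projectivization
open Matrix (vecMulVec vecMulVec_apply)
open scoped LinearAlgebra.Projectivization

theorem Matrix.span_range_row_le_span_singleton_iff {K m n : Type*} [CommSemiring K]
    (M : Matrix m n K) (p : n → K) :
    Submodule.span K (Set.range M.row) ≤ K ∙ p ↔ ∃ u, vecMulVec u p = M := by
  rw [Submodule.span_le, Set.range_subset_iff]
  simp only [SetLike.mem_coe, Submodule.mem_span_singleton, Matrix.row]
  constructor
  · intro h
    choose u hu using h
    exact ⟨u, by ext i j; simp [vecMulVec_apply, ← hu i]⟩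
  · rintro ⟨u, rfl⟩ i
    exact ⟨u i, by ext j; simp [vecMulVec_apply]⟩

theorem Matrix.eq_zero_of_vecMulVec_eq_zero {K m n : Type*} [MulZeroClass K] [NoZeroDivisors K]
    {u : m → K} {p : n → K}
    (hp : p ≠ 0) (h : vecMulVec u p = 0) : u = 0 := by
  obtain ⟨j, hj⟩ := Function.ne_iff.mp hp
  ext i
  exact (mul_eq_zero.mp (congrFun₂ h i j)).resolve_right hj

section ProjectiveLine

variable {K V ι : Type*} [DivisionRing K] [AddCommGroup V] [Module K V] [Fintype ι] {p : ι → ℙ K V}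

theorem card_filter_le_submodule_of_finrank_eq_one (hp : Function.Bijective p)
    {L : Submodule K V} (hL : finrank K L = 1) : #{i | L ≤ (p i).submodule} = 1 := by
  obtain ⟨i, hi⟩ := hp.2 (mk'' L hL)
  refine card_eq_one.mpr ⟨i, ext fun j => ?_⟩
  have hle : L ≤ (p j).submodule ↔ p j = p i := by
    rw [hi, ← submodule_injective.eq_iff, submodule_mk'']
    refine ⟨fun h => (Submodule.eq_of_le_of_finrank_eq h ?_).symm, fun h => h.ge⟩
    rw [finrank_submodule, hL]
  simp only [mem_filter, mem_univ, true_and, mem_singleton, hle, hp.1.eq_iff]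

theorem filter_le_submodule_eq_empty {L : Submodule K V} (hL : 1 < finrank K L) :
    ({i | L ≤ (p i).submodule} : Finset ι) = ∅ :=
  filter_false_of_mem fun i _ hle =>
    (Submodule.finrank_mono hle).not_gt (by rwa [finrank_submodule])

theorem card_filter_le_submodule_congr [FiniteDimensional K V] (hp : Function.Bijective p)
    {L L' : Submodule K V} (h : finrank K L = finrank K L') :
    #{i | L ≤ (p i).submodule} = #{i | L' ≤ (p i).submodule} := by
  match hn : finrank K L with
  | 0 =>
    have hn' : finrank K L' = 0 := h ▸ hn
    rw [Submodule.finrank_eq_zero.mp hn, Submodule.finrank_eq_zero.mp hn']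
  | 1 =>
    rw [card_filter_le_submodule_of_finrank_eq_one hp hn,
      card_filter_le_submodule_of_finrank_eq_one hp (h ▸ hn)]
  | n + 2 =>
    rw [filter_le_submodule_eq_empty (by omega), filter_le_submodule_eq_empty (by omega)]

end ProjectiveLine

theorem bijective_mk_of_mul_ne {K : Type*} [Field K] [Fintype K]
    {α β : Fin (Fintype.card K + 1) → K} (hαβ : ∀ i, ![α i, β i] ≠ 0)
    (hproj : ∀ i j, i ≠ j → α i * β j ≠ α j * β i) :
    Function.Bijective fun i => mk K ![α i, β i] (hαβ i) := by
  refine Function.Injective.bijective_of_nat_card_le (fun i j hij => ?_) ?_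
  · by_contra hne
    obtain ⟨c, hc⟩ := (mk_eq_mk_iff' K _ _ (hαβ i) (hαβ j)).mp hij
    have hα : c * α j = α i := congrFun hc 0
    have hβ : c * β j = β i := congrFun hc 1
    exact hproj i j hne (by rw [← hα, ← hβ]; ring)
  · rw [card_of_finrank_two K (Fin 2 → K) (by simp)]
    simp

section Frame

variable {K W : Type*} [Field K] [AddCommGroup W] [Module K W]

def frame (a b c d : W) : Matrix (Fin 2) (Fin 2) K →ₗ[K] W where
  toFun M := M 0 0 • a + M 0 1 • b + M 1 0 • c + M 1 1 • d
  map_add' M N := by simp only [Matrix.add_apply, add_smul]; abel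
  map_smul' r M := by
    simp only [Matrix.smul_apply, smul_eq_mul, mul_smul, RingHom.id_apply, smul_add]

variable {a b c d : W}

theorem frame_apply (M : Matrix (Fin 2) (Fin 2) K) :
    frame a b c d M = M 0 0 • a + M 0 1 • b + M 1 0 • c + M 1 1 • d := rfl

theorem frame_transpose (M : Matrix (Fin 2) (Fin 2) K) :
    frame a c b d M.transpose = frame a b c d M := by
  simp only [frame_apply, Matrix.transpose_apply]; abel

theorem frame_vecMulVec (u : Fin 2 → K) (γ δ : K) :
    frame a b c d (vecMulVec u ![γ, δ]) = u 0 • (γ • a + δ • b) + u 1 • (γ • c + δ • d) := by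
  simp only [frame_apply, vecMulVec_apply, Matrix.cons_val_zero, Matrix.cons_val_one,
    Matrix.cons_val_fin_one, smul_add, mul_smul]
  abel

theorem range_frame :
    LinearMap.range (frame a b c d : _ →ₗ[K] W) = Submodule.span K {a, b, c, d} := by
  apply le_antisymm
  · rintro _ ⟨M, rfl⟩
    refine add_mem (add_mem (add_mem ?_ ?_) ?_) ?_ <;>
      exact Submodule.smul_mem _ _ (Submodule.subset_span (by simp))
  · rw [Submodule.span_le]
    rintro _ (rfl | rfl | rfl | rfl)
    exacts [⟨Matrix.single 0 0 1, by simp [frame_apply]⟩,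
      ⟨Matrix.single 0 1 1, by simp [frame_apply]⟩,
      ⟨Matrix.single 1 0 1, by simp [frame_apply]⟩,
      ⟨Matrix.single 1 1 1, by simp [frame_apply]⟩]

theorem range_frame_swap :
    LinearMap.range (frame a c b d : _ →ₗ[K] W) = LinearMap.range (frame a b c d) := by
  rw [range_frame, range_frame, Set.insert_comm c b]

theorem frame_injective (h : LinearIndependent K ![a, b, c, d]) :
    Function.Injective (frame a b c d : _ →ₗ[K] W) := by
  refine (injective_iff_map_eq_zero _).mpr fun M hM => ?_
  have hzero := Fintype.linearIndependent_iff.mp h ![M 0 0, M 0 1, M 1 0, M 1 1]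
    (by simpa [Fin.sum_univ_four, frame_apply] using hM)
  ext i j
  fin_cases i <;> fin_cases j
  exacts [hzero 0, hzero 1, hzero 2, hzero 3]

theorem frame_swap_injective (hf : Function.Injective (frame a b c d : _ →ₗ[K] W)) :
    Function.Injective (frame a c b d : _ →ₗ[K] W) := fun M N h => by
  rw [← frame_transpose (b := c) (c := b), ← frame_transpose (b := c) (c := b)] at h
  exact Matrix.transpose_injective (hf h)

theorem mem_span_pair_iff_exists_frame (γ δ : K) {x : W} :
    x ∈ Submodule.span K {γ • a + δ • b, γ • c + δ • d} ↔
      ∃ u, frame a b c d (vecMulVec u ![γ, δ]) = x := by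
  simp only [Submodule.mem_span_pair, frame_vecMulVec]
  constructor
  · rintro ⟨r, t, rfl⟩
    exact ⟨![r, t], rfl⟩
  · rintro ⟨u, rfl⟩
    exact ⟨u 0, u 1, rfl⟩

theorem span_pair_le_range_frame (γ δ : K) :
    Submodule.span K {γ • a + δ • b, γ • c + δ • d} ≤ LinearMap.range (frame a b c d) :=
  fun _ hx => by
    obtain ⟨u, rfl⟩ := (mem_span_pair_iff_exists_frame γ δ).mp hx
    exact LinearMap.mem_range_self _ _

variable {S : Submodule K W}

theorem eq_of_add_frame_eq (hf : Function.Injective (frame a b c d : _ →ₗ[K] W))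
    (hS : Disjoint S (LinearMap.range (frame a b c d))) {s s' : W} (hs : s ∈ S) (hs' : s' ∈ S)
    {M N : Matrix (Fin 2) (Fin 2) K} (h : s + frame a b c d M = s' + frame a b c d N) :
    M = N := by
  have hMN : frame a b c d (M - N) ∈ S := by
    rw [map_sub, show frame a b c d M - frame a b c d N = s' - s by
      rw [sub_eq_sub_iff_add_eq_add, add_comm, h, add_comm]]
    exact sub_mem hs' hs
  rw [← sub_eq_zero, ← hf.eq_iff, map_zero]
  exact Submodule.disjoint_def.mp hS _ hMN (LinearMap.mem_range_self _ _)

theorem add_frame_mem_sup_span_pair_iff (hf : Function.Injective (frame a b c d : _ →ₗ[K] W))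
    (hS : Disjoint S (LinearMap.range (frame a b c d))) {s : W} (hs : s ∈ S)
    (M : Matrix (Fin 2) (Fin 2) K) (γ δ : K) :
    s + frame a b c d M ∈ S ⊔ Submodule.span K {γ • a + δ • b, γ • c + δ • d} ↔
      Submodule.span K (Set.range M.row) ≤ K ∙ ![γ, δ] := by
  rw [Matrix.span_range_row_le_span_singleton_iff, Submodule.mem_sup]
  constructor
  · rintro ⟨s', hs', x, hx, hsum⟩
    obtain ⟨u, rfl⟩ := (mem_span_pair_iff_exists_frame γ δ).mp hx
    exact ⟨u, eq_of_add_frame_eq hf hS hs' hs hsum⟩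
  · rintro ⟨u, rfl⟩
    exact ⟨s, hs, _, (mem_span_pair_iff_exists_frame γ δ).mpr ⟨u, rfl⟩, rfl⟩

theorem finrank_sup_span_pair [FiniteDimensional K W]
    (hf : Function.Injective (frame a b c d : _ →ₗ[K] W))
    (hS : Disjoint S (LinearMap.range (frame a b c d))) {γ δ : K} (hγδ : ![γ, δ] ≠ 0) :
    finrank K ↥(S ⊔ Submodule.span K {γ • a + δ • b, γ • c + δ • d}) = finrank K S + 2 := by
  have hind : LinearIndependent K ![γ • a + δ • b, γ • c + δ • d] := by
    refine LinearIndependent.pair_iff.mpr fun r t h => ?_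
    have hzero := Matrix.eq_zero_of_vecMulVec_eq_zero hγδ
      (hf ((frame_vecMulVec ![r, t] γ δ).trans (h.trans (map_zero _).symm)))
    exact ⟨congrFun hzero 0, congrFun hzero 1⟩
  have hpair : finrank K (Submodule.span K {γ • a + δ • b, γ • c + δ • d}) = 2 := by
    rw [← Matrix.range_cons_cons_empty _ _ ![], finrank_span_eq_card hind, Fintype.card_fin]
  have hinf : S ⊓ Submodule.span K {γ • a + δ • b, γ • c + δ • d} = ⊥ :=
    (hS.mono_right (span_pair_le_range_frame γ δ)).eq_bot
  have hsum := Submodule.finrank_sup_add_finrank_inf_eq S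
    (Submodule.span K {γ • a + δ • b, γ • c + δ • d})
  rwa [hinf, finrank_bot, add_zero, hpair] at hsum

theorem sup_span_pair_ne_sup_span_pair_swap
    (hf : Function.Injective (frame a b c d : _ →ₗ[K] W))
    (hS : Disjoint S (LinearMap.range (frame a b c d))) {γ δ : K} (hγδ : ![γ, δ] ≠ 0)
    (γ' δ' : K) :
    S ⊔ Submodule.span K {γ • a + δ • b, γ • c + δ • d} ≠
      S ⊔ Submodule.span K {γ' • a + δ' • c, γ' • b + δ' • d} := by
  intro h
  obtain ⟨j, hj⟩ := Function.ne_iff.mp hγδ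
  have hall : ∀ u : Fin 2 → K, u ∈ K ∙ ![γ', δ'] := by
    intro u
    have hmem := (add_frame_mem_sup_span_pair_iff hf hS S.zero_mem (vecMulVec u ![γ, δ]) γ
      δ).mpr ((Matrix.span_range_row_le_span_singleton_iff _ _).mpr ⟨u, rfl⟩)
    rw [h, ← frame_transpose, add_frame_mem_sup_span_pair_iff (frame_swap_injective hf)
      (by rwa [range_frame_swap]) S.zero_mem, Matrix.transpose_vecMulVec] at hmem
    have hrow : ![γ, δ] j • u ∈ K ∙ ![γ', δ'] := hmem (Submodule.subset_span ⟨j, rfl⟩)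
    exact (Submodule.smul_mem_iff _ hj).mp hrow
  have hle := Submodule.finrank_mono (fun u _ => hall u : ⊤ ≤ K ∙ ![γ', δ'])
  have hline : finrank K (K ∙ ![γ', δ']) ≤ 1 := (finrank_span_le_card _).trans (by simp)
  rw [finrank_top, finrank_fin_fun] at hle
  omega

theorem card_filter_mem_sup_span_pair_eq_swap
    (hf : Function.Injective (frame a b c d : _ →ₗ[K] W))
    (hS : Disjoint S (LinearMap.range (frame a b c d))) {ι : Type*} [Fintype ι] {α β : ι → K}
    (hαβ : ∀ i, ![α i, β i] ≠ 0) (hP : Function.Bijective fun i => mk K ![α i, β i] (hαβ i))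
    (w : W) :
    #{i | w ∈ S ⊔ Submodule.span K {α i • a + β i • b, α i • c + β i • d}} =
      #{i | w ∈ S ⊔ Submodule.span K {α i • a + β i • c, α i • b + β i • d}} := by
  by_cases hw : w ∈ S ⊔ LinearMap.range (frame a b c d)
  · obtain ⟨s, hs, _, ⟨M, rfl⟩, rfl⟩ := Submodule.mem_sup.mp hw
    have hV (i : ι) :
        s + frame a b c d M ∈ S ⊔ Submodule.span K {α i • a + β i • b, α i • c + β i • d} ↔
          Submodule.span K (Set.range M.row) ≤ (mk K ![α i, β i] (hαβ i)).submodule := by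
      rw [submodule_mk, add_frame_mem_sup_span_pair_iff hf hS hs]
    have hU (i : ι) :
        s + frame a b c d M ∈ S ⊔ Submodule.span K {α i • a + β i • c, α i • b + β i • d} ↔
          Submodule.span K (Set.range M.transpose.row) ≤ (mk K ![α i, β i] (hαβ i)).submodule := by
      rw [submodule_mk, ← frame_transpose, add_frame_mem_sup_span_pair_iff
        (frame_swap_injective hf) (by rwa [range_frame_swap]) hs]
    simp only [hV, hU]
    refine card_filter_le_submodule_congr hP ?_
    rw [← Matrix.rank_eq_finrank_span_row, ← Matrix.rank_eq_finrank_span_row,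
      Matrix.rank_transpose]
  · have hout (γ δ : K) : w ∉ S ⊔ Submodule.span K {γ • a + δ • b, γ • c + δ • d} :=
      fun h => hw (sup_le_sup_left (span_pair_le_range_frame γ δ) S h)
    have hout' (γ δ : K) : w ∉ S ⊔ Submodule.span K {γ • a + δ • c, γ • b + δ • d} :=
      fun h => hw (by
        rw [← range_frame_swap (K := K) (b := b) (c := c)]
        exact sup_le_sup_left (span_pair_le_range_frame γ δ) S h)
    rw [filter_false_of_mem fun i _ => hout _ _, filter_false_of_mem fun i _ => hout' _ _]

end Frame

theorem isometrySolution_of_card_filter_mem_eq {K W : Type*} [Field K] [AddCommGroup W]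
    [Module K W] {m n : ℕ} {U V : Fin m → Submodule K W}
    (hU : ∀ i, Nat.card (U i) = n) (hV : ∀ i, Nat.card (V i) = n)
    (h : ∀ w, #{i | w ∈ V i} = #{i | w ∈ U i}) : IsometrySolution U V := fun w => by
  simp only [hU, hV, ← mul_sum, sum_boole, h w]

/-- A pair of Type C is a nontrivial solution of the isometry equation, and all its spaces
have dimension `dim S + 2`. -/
theorem typeC_is_nontrivial_solution
    (K W : Type*) [Field K] [Fintype K] [AddCommGroup W] [Module K W]
    [FiniteDimensional K W]
    (S : Submodule K W) (a b c d : W)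
    (habcd : LinearIndependent K ![a, b, c, d])
    (hSabcd : S ⊓ Submodule.span K {a, b, c, d} = ⊥)
    (α β : Fin (Fintype.card K + 1) → K)
    (hαβ : ∀ i, (α i, β i) ≠ 0)
    (hproj : ∀ i j, i ≠ j → α i * β j ≠ α j * β i)
    (U V : Fin (Fintype.card K + 1) → Submodule K W)
    (hV : ∀ i, V i = S ⊔ Submodule.span K {α i • a + β i • b, α i • c + β i • d})
    (hU : ∀ i, U i = S ⊔ Submodule.span K {α i • a + β i • c, α i • b + β i • d}) :
    IsometrySolution U V ∧ ¬ TuplesEquiv U V ∧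
    (∀ i, Module.finrank K ↥(V i) = Module.finrank K ↥S + 2 ∧
          Module.finrank K ↥(U i) = Module.finrank K ↥S + 2) := by
  have hαβ' (i) : ![α i, β i] ≠ 0 := by
    simpa [funext_iff, Fin.forall_fin_two, Prod.ext_iff] using hαβ i
  have hf := frame_injective habcd
  have hS : Disjoint S (LinearMap.range (frame a b c d)) := by
    rwa [range_frame, disjoint_iff]
  have hS' : Disjoint S (LinearMap.range (frame a c b d)) := by rwa [range_frame_swap]
  have hdim (i) : finrank K (V i) = finrank K S + 2 ∧ finrank K (U i) = finrank K S + 2 := by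
    rw [hV, hU]
    exact ⟨finrank_sup_span_pair hf hS (hαβ' i),
      finrank_sup_span_pair (frame_swap_injective hf) hS' (hαβ' i)⟩
  refine ⟨isometrySolution_of_card_filter_mem_eq
    (fun i => by rw [natCard_eq_pow_finrank (K := K), (hdim i).2])
    (fun i => by rw [natCard_eq_pow_finrank (K := K), (hdim i).1]) fun w => ?_, ?_, hdim⟩
  · simp only [hV, hU]
    exact card_filter_mem_sup_span_pair_eq_swap hf hS hαβ' (bijective_mk_of_mul_ne hαβ' hproj) w
  · rintro ⟨π, hπ⟩
    exact sup_span_pair_ne_sup_span_pair_swap hf hS (hαβ' 0) _ _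
      ((hV 0).symm.trans ((hπ 0).trans (hU _)))
end

section
/- Let K be a finite field with |K| = q, let W be a finite-dimensional K-vector space, and let (U,V) be a nontrivial solution of the isometry equation with tuples of length m = q+1. Then for all i ≠ j in {1,…,m} and every k ∈ {1,…,m}, both V_k ⊆ V_i + V_j and U_k ⊆ V_i + V_j; moreover, for all i ≠ j, dim_K(V_i + V_j) ≤ 2 + max_{1≤k≤m} dim_K V_k. -/
open Finset
open scoped Classical

/-!
Dualize: with `A k = (V k)ᗮ` and `B k = (U k)ᗮ` in `Module.Dual K W`, summing the isometry
equation over `ker φ` shows that every functional `φ` lies in as many `A k` as `B k`, i.e.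
`∑ 1_{A k} = ∑ 1_{B k}`. For multisets of subspaces with equal indicator sums:

* with at most `q` members they coincide: a member of maximal dimension is covered by the
  members of the other side, and no space is a union of `q` proper subspaces, so it is one of them;
* with `q + 1` members and distinct, a vector `x` in two members lies in all members of both:
  otherwise the members through `x` (counted along the lines `y + K x`) and the remaining ones
  would form two shorter, hence trivial, solutions;
* so `D = A i ⊓ A j` lies in every member and contains every pairwise intersection. If every
  `A k` had dimension `> dim D + 2`, the `B l` could not cut an `A k` into `q + 1` subspaces
  meeting pairwise in `D` (too few points), so `A k ≤ B l`; symmetrically `B l ≤ A k'`, whence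
  `A k = B l`, and cancelling it contradicts the first point.

Since `(V i ⊔ V j)ᗮ = D`, dualizing back gives both claims.
-/

open Module

lemma Multiset.two_le_countP_of_mem_erase {α : Type*} [DecidableEq α] {P : α → Prop}
    [DecidablePred P] {s : Multiset α} {a b : α} (ha : a ∈ s) (hb : b ∈ s.erase a) (hPa : P a)
    (hPb : P b) : 2 ≤ s.countP P := by
  rw [← Multiset.cons_erase ha, Multiset.countP_cons_of_pos _ hPa]
  exact Nat.succ_le_succ (Multiset.countP_pos.mpr ⟨b, hb, hPb⟩)

lemma Multiset.countP_map_univ {ι α : Type*} [Fintype ι] (f : ι → α) (P : α → Prop)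
    [DecidablePred P] : (univ.val.map f).countP P = #{i | P (f i)} := by
  rw [Multiset.countP_map]
  rfl

lemma Fintype.exists_perm_of_map_univ_eq {ι α : Type*} [Fintype ι] {f g : ι → α}
    (h : univ.val.map f = univ.val.map g) : ∃ π : Equiv.Perm ι, ∀ i, f i = g (π i) := by
  have e : ∀ a, {i // f i = a} ≃ {i // g i = a} := fun a => Fintype.equivOfCardEq <| by
    have := congrArg (Multiset.countP (· = a)) h
    rwa [Multiset.countP_map_univ, Multiset.countP_map_univ, ← Fintype.card_subtype,
      ← Fintype.card_subtype] at this
  exact ⟨Equiv.ofFiberEquiv e, fun i => (Equiv.ofFiberEquiv_map e i).symm⟩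

lemma Set.ncard_sdiff_le_sum_ncard_sdiff {α ι : Type*} [Finite α] (D Y : Set α)
    (C : Multiset ι) (s : ι → Set α) (hY : ∀ y ∈ Y, ∃ i ∈ C, y ∈ s i) :
    (Y \ D).ncard ≤ (C.map fun i => (s i \ D).ncard).sum := by
  induction C using Multiset.induction_on generalizing Y with
  | empty =>
    simp [Set.eq_empty_of_forall_notMem fun y hy => by simpa using hY y hy]
  | cons i C ih =>
    have hsplit : Y \ D ⊆ (s i \ D) ∪ ((Y \ s i) \ D) := by
      intro y hy
      by_cases hyi : y ∈ s i <;> simp_all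
    have hrest := ih (Y \ s i) fun y hy => by
      obtain ⟨j, hj, hyj⟩ := hY y hy.1
      rcases Multiset.mem_cons.mp hj with rfl | hj
      · exact absurd hyj hy.2
      · exact ⟨j, hj, hyj⟩
    calc (Y \ D).ncard ≤ ((s i \ D) ∪ ((Y \ s i) \ D)).ncard := Set.ncard_le_ncard hsplit
      _ ≤ (s i \ D).ncard + ((Y \ s i) \ D).ncard := Set.ncard_union_le _ _
      _ ≤ _ := by simpa using hrest

lemma Finset.card_filter_eq_of_sum_ite_eq {ι : Type*} {s : Finset ι} {P Q : ι → Prop}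
    [DecidablePred P] [DecidablePred Q] {r : ℝ} (hr : r ≠ 1)
    (h : ∑ i ∈ s, (if P i then 1 else r) = ∑ i ∈ s, (if Q i then 1 else r)) :
    #{i ∈ s | P i} = #{i ∈ s | Q i} := by
  have hsplit : ∀ R : ι → Prop, [DecidablePred R] →
      ∑ i ∈ s, (if R i then 1 else r) = r * #s + (1 - r) * #{i ∈ s | R i} := by
    intro R _
    rw [Finset.sum_ite, Finset.sum_const, Finset.sum_const,
      ← Finset.card_filter_add_card_filter_not (s := s) (p := R)]
    simp only [nsmul_eq_mul, Nat.cast_add]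
    ring
  rw [hsplit, hsplit] at h
  exact_mod_cast mul_left_cancel₀ (sub_ne_zero.mpr hr.symm) (add_left_cancel h)

lemma pow_add_pow_succ_lt {q e N a b : ℕ} (hq : 2 ≤ q) (hN : e + 3 ≤ N) (ha : a < N)
    (hba : b ≤ a) (hab : a + b ≤ N + e) : q ^ a + q ^ (b + 1) < q ^ N + q ^ (e + 1) := by
  have hpos : 0 < q ^ (e + 1) := by positivity
  rcases le_or_gt a (e + 1) with hae | hae
  · have h1 : q ^ a ≤ q ^ (e + 1) := Nat.pow_le_pow_right (by omega) hae
    have h2 : q ^ (b + 1) < q ^ N := Nat.pow_lt_pow_right (by omega) (by omega)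
    omega
  · have h1 : q ^ a ≤ q ^ (N - 1) := Nat.pow_le_pow_right (by omega) (by omega)
    have h2 : q ^ (b + 1) ≤ q ^ (N - 1) := Nat.pow_le_pow_right (by omega) (by omega)
    have h3 : 2 * q ^ (N - 1) ≤ q ^ N := by
      rw [← Nat.sub_add_cancel (show 1 ≤ N by omega), pow_succ', Nat.add_sub_cancel]
      exact Nat.mul_le_mul_right _ hq
    omega

lemma Submodule.finrank_add_finrank_le_of_le_of_inf_le {K E : Type*} [DivisionRing K]
    [AddCommGroup E] [Module K E] [FiniteDimensional K E] {c c' D X : Submodule K E} (hc : c ≤ X)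
    (hc' : c' ≤ X) (hD : c ⊓ c' ≤ D) :
    finrank K c + finrank K c' ≤ finrank K X + finrank K D := by
  have := Submodule.finrank_sup_add_finrank_inf_eq c c'
  have := Submodule.finrank_mono (sup_le hc hc')
  have := Submodule.finrank_mono hD
  omega

lemma Multiset.inf_le_of_countP_eq_one {R M : Type*} [Semiring R] [AddCommMonoid M]
    [Module R M] {C : Multiset (Submodule R M)} {D X : Submodule R M} (hX : ∀ c ∈ C, c ≤ X)
    (hone : ∀ x ∈ X, x ∉ D → C.countP (x ∈ ·) = 1) {c c' : Submodule R M} (hc : c ∈ C)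
    (hc' : c' ∈ C.erase c) : c ⊓ c' ≤ D := by
  intro x ⟨hx, hx'⟩
  by_contra hxD
  have := Multiset.two_le_countP_of_mem_erase (P := (x ∈ ·)) hc hc' hx hx'
  rw [hone x (hX c hc hx) hxD] at this
  omega

section FiniteVectorSpace

variable {K E : Type*} [Field K] [Fintype K] [AddCommGroup E] [Module K E] [Finite E]

lemma Submodule.ncard_eq_pow_finrank (p : Submodule K E) :
    (p : Set E).ncard = Fintype.card K ^ finrank K p := by
  rw [← Nat.card_coe_set_eq, SetLike.coe_sort_coe, Module.natCard_eq_pow_finrank (K := K),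
    Nat.card_eq_fintype_card]

lemma pow_finrank_sub_le_sum_of_covers (D X : Submodule K E) (C : Multiset (Submodule K E))
    (hD : ∀ c ∈ C, D ≤ c) (hX : ∀ x ∈ X, ∃ c ∈ C, x ∈ c) :
    Fintype.card K ^ finrank K X - Fintype.card K ^ finrank K D ≤
      (C.map fun c : Submodule K E =>
        Fintype.card K ^ finrank K c - Fintype.card K ^ finrank K D).sum := by
  have hsum := Set.ncard_sdiff_le_sum_ncard_sdiff (D : Set E) X C (fun c => (c : Set E)) hX
  rw [Multiset.map_congr rfl fun c hc => Set.ncard_sdiff (SetLike.coe_subset_coe.mpr (hD c hc))]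
    at hsum
  simp only [Submodule.ncard_eq_pow_finrank] at hsum
  simpa only [Submodule.ncard_eq_pow_finrank] using (Set.le_ncard_sdiff (D : Set E) X).trans hsum

theorem card_lt_card_of_covers (X : Submodule K E) (T : Multiset (Submodule K E))
    (hT : ∀ p ∈ T, ¬ X ≤ p) (hX : ∀ x ∈ X, ∃ p ∈ T, x ∈ p) :
    Fintype.card K < Multiset.card T := by
  by_contra! hcard
  have hq : 2 ≤ Fintype.card K := Fintype.one_lt_card
  have hd : 1 ≤ finrank K X := by
    obtain ⟨p, hp, -⟩ := hX 0 X.zero_mem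
    exact Submodule.one_le_finrank_iff.mpr fun hbot => hT p hp (hbot ▸ bot_le)
  have hcount := pow_finrank_sub_le_sum_of_covers ⊥ X (T.map (X ⊓ ·))
    (fun _ _ => bot_le) fun x hx => by
      obtain ⟨p, hp, hxp⟩ := hX x hx
      exact ⟨X ⊓ p, Multiset.mem_map_of_mem _ hp, hx, hxp⟩
  have hterm : ∀ p ∈ T, Fintype.card K ^ finrank K ↥(X ⊓ p) - 1 ≤
      Fintype.card K ^ (finrank K X - 1) - 1 := fun p hp =>
    Nat.sub_le_sub_right (Nat.pow_le_pow_right (by omega) (Nat.le_sub_one_of_lt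
      (Submodule.finrank_lt_finrank_of_lt (inf_lt_left.mpr (hT p hp))))) _
  have hsum := Multiset.sum_le_card_nsmul
    (T.map fun p => Fintype.card K ^ finrank K ↥(X ⊓ p) - 1) _ fun n hn => by
      obtain ⟨p, hp, rfl⟩ := Multiset.mem_map.mp hn
      exact hterm p hp
  simp only [finrank_bot, pow_zero, Multiset.map_map, Function.comp_def,
    Multiset.card_map, smul_eq_mul] at hcount hsum
  set r := Fintype.card K ^ (finrank K X - 1)
  have hpow : Fintype.card K ^ finrank K X = Fintype.card K * r := by
    rw [← pow_succ', Nat.sub_add_cancel hd]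
  have hr : 1 ≤ r := Nat.one_le_pow _ _ (by omega)
  have hle : Fintype.card K * r - 1 ≤ Fintype.card K * r - Fintype.card K := by
    rw [← Nat.mul_sub_one, ← hpow]
    exact (hcount.trans hsum).trans (Nat.mul_le_mul_right _ hcard)
  have : Fintype.card K ≤ Fintype.card K * r := Nat.le_mul_of_pos_right _ hr
  omega

theorem finrank_le_finrank_add_two_of_countP_eq_one (D X : Submodule K E)
    (C : Multiset (Submodule K E)) (hC : Multiset.card C = Fintype.card K + 1)
    (hD : ∀ c ∈ C, D ≤ c) (hX : ∀ c ∈ C, c < X)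
    (hone : ∀ x ∈ X, x ∉ D → C.countP (x ∈ ·) = 1) :
    finrank K X ≤ finrank K D + 2 := by
  by_contra! hN
  have hq : 2 ≤ Fintype.card K := Fintype.one_lt_card
  obtain ⟨c₀, hc₀, hmax⟩ := C.exists_max_image (fun c : Submodule K E => finrank K c)
    (by rintro rfl; simp at hC)
  have hcov : ∀ x ∈ X, ∃ c ∈ C, x ∈ c := fun x hx => by
    by_cases hxD : x ∈ D
    · exact ⟨c₀, hc₀, hD c₀ hc₀ hxD⟩
    · exact Multiset.countP_pos.mp (by rw [hone x hx hxD]; exact one_pos)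
  have hsum := pow_finrank_sub_le_sum_of_covers D X C hD hcov
  rw [← Multiset.cons_erase hc₀, Multiset.map_cons, Multiset.sum_cons] at hsum
  set q := Fintype.card K
  set a := finrank K c₀
  set e := finrank K D
  set N := finrank K X
  -- the other members have dimension `≤ b`: `c₀` is maximal and meets each of them in `D`
  set b := min a (N + e - a)
  have ha : a < N := Submodule.finrank_lt_finrank_of_lt (hX c₀ hc₀)
  have hea : e ≤ a := Submodule.finrank_mono (hD c₀ hc₀)
  have hrest := Multiset.sum_le_card_nsmul
    ((C.erase c₀).map fun c : Submodule K E => q ^ finrank K c - q ^ e) (q ^ b - q ^ e)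
    fun n hn => by
      obtain ⟨c, hc, rfl⟩ := Multiset.mem_map.mp hn
      have := Submodule.finrank_add_finrank_le_of_le_of_inf_le (hX c₀ hc₀).le
        (hX c (Multiset.mem_of_mem_erase hc)).le
        (Multiset.inf_le_of_countP_eq_one (fun c hc => (hX c hc).le) hone hc₀ hc)
      have := hmax c (Multiset.mem_of_mem_erase hc)
      exact Nat.sub_le_sub_right (Nat.pow_le_pow_right (by omega) (by omega)) _
  rw [Multiset.card_map, Multiset.card_erase_of_mem hc₀, hC, smul_eq_mul, Nat.pred_succ,
    Nat.mul_sub, ← pow_succ', ← pow_succ'] at hrest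
  have := pow_add_pow_succ_lt (b := b) hq (by omega) ha (min_le_left _ _)
    (by omega : a + b ≤ N + e)
  have := Nat.pow_le_pow_right (n := q) (by omega) hea
  have := Nat.pow_le_pow_right (n := q) (by omega) (by omega : e + 1 ≤ b + 1)
  have := Nat.pow_le_pow_right (n := q) (by omega) (by omega : e ≤ N)
  omega

end FiniteVectorSpace

section LineCount

variable {K E : Type*} [Field K] [Fintype K] [AddCommGroup E] [Module K E]

lemma Submodule.card_filter_add_smul_mem_of_mem {p : Submodule K E} {x : E} (hx : x ∈ p) (y : E) :
    #{t : K | y + t • x ∈ p} = if y ∈ p then Fintype.card K else 0 := by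
  simp only [p.add_mem_iff_left (p.smul_mem _ hx)]
  split_ifs with hy <;> simp [hy]

lemma Submodule.card_filter_add_smul_mem_le_one {p : Submodule K E} {x : E} (hx : x ∉ p) (y : E) :
    #{t : K | y + t • x ∈ p} ≤ 1 := by
  refine Finset.card_le_one.mpr fun t₁ h₁ t₂ h₂ => by_contra fun hne => hx ?_
  simp only [Finset.mem_filter, Finset.mem_univ, true_and] at h₁ h₂
  have := p.sub_mem h₁ h₂
  rwa [add_sub_add_left_eq_sub, ← sub_smul, p.smul_mem_iff (sub_ne_zero.mpr hne)] at this

lemma Multiset.sum_countP_add_smul_mem_bounds (S : Multiset (Submodule K E)) (x y : E) :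
    Fintype.card K * (S.filter (x ∈ ·)).countP (y ∈ ·) ≤
        ∑ t : K, S.countP (y + t • x ∈ ·) ∧
      ∑ t : K, S.countP (y + t • x ∈ ·) ≤
        Fintype.card K * (S.filter (x ∈ ·)).countP (y ∈ ·) + S.countP (x ∉ ·) := by
  induction S using Multiset.induction_on with
  | empty => simp
  | cons p S ih =>
    simp only [Multiset.countP_cons, Finset.sum_add_distrib, Finset.sum_boole, Nat.cast_id]
    by_cases hx : x ∈ p
    · rw [Multiset.filter_cons_of_pos (p := (x ∈ ·)) S hx, Multiset.countP_cons,
        p.card_filter_add_smul_mem_of_mem hx]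
      simp only [hx, not_true_eq_false, if_false]
      split_ifs <;> constructor <;> linarith
    · have := p.card_filter_add_smul_mem_le_one hx y
      rw [Multiset.filter_cons_of_neg (p := (x ∈ ·)) S hx]
      simp only [hx, not_false_eq_true, if_true]
      constructor <;> linarith

-- Members through `x` meet the line `y + K x` in all `q` points or in none, the others in at
-- most one point; by `hS` the latter are lost in the division.
lemma Multiset.countP_filter_eq_sum_div (S : Multiset (Submodule K E)) {x : E}
    (hS : S.countP (x ∉ ·) < Fintype.card K) (y : E) :
    (S.filter (x ∈ ·)).countP (y ∈ ·) =
      (∑ t : K, S.countP (y + t • x ∈ ·)) / Fintype.card K := by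
  obtain ⟨hlo, hhi⟩ := S.sum_countP_add_smul_mem_bounds x y
  exact (Nat.div_eq_of_lt_le (by linarith) (by rw [add_mul]; linarith)).symm

end LineCount

def SameIndicatorSum {K E : Type*} [Field K] [AddCommGroup E] [Module K E]
    (S T : Multiset (Submodule K E)) : Prop :=
  ∀ x : E, S.countP (x ∈ ·) = T.countP (x ∈ ·)

namespace SameIndicatorSum

variable {K E : Type*} [Field K] [AddCommGroup E] [Module K E] {S T : Multiset (Submodule K E)}

lemma symm (h : SameIndicatorSum S T) : SameIndicatorSum T S := fun x => (h x).symm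

lemma card_eq (h : SameIndicatorSum S T) : Multiset.card S = Multiset.card T := by
  simpa only [Submodule.zero_mem, Multiset.countP_True] using h 0

lemma of_add {R R' : Multiset (Submodule K E)} (h : SameIndicatorSum (R + S) (R' + T))
    (hR : SameIndicatorSum R R') : SameIndicatorSum S T := fun x => by
  have := h x
  rw [Multiset.countP_add, Multiset.countP_add, hR x] at this
  omega

lemma erase (h : SameIndicatorSum S T) {p : Submodule K E} (hS : p ∈ S) (hT : p ∈ T) :
    SameIndicatorSum (S.erase p) (T.erase p) :=
  of_add (R := {p}) (R' := {p})
    (by rwa [Multiset.singleton_add, Multiset.singleton_add, Multiset.cons_erase hS,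
      Multiset.cons_erase hT]) fun _ => rfl

variable [Fintype K]

lemma filter_mem (h : SameIndicatorSum S T) {x : E} (hS : S.countP (x ∉ ·) < Fintype.card K)
    (hT : T.countP (x ∉ ·) < Fintype.card K) :
    SameIndicatorSum (S.filter (x ∈ ·)) (T.filter (x ∈ ·)) := fun y => by
  simp only [S.countP_filter_eq_sum_div hS, T.countP_filter_eq_sum_div hT, h _]

variable [Finite E]

lemma mem_of_forall_finrank_le (h : SameIndicatorSum S T) {M : Submodule K E} (hM : M ∈ S)
    (hmax : ∀ p ∈ T, finrank K p ≤ finrank K M) (hT : Multiset.card T ≤ Fintype.card K) :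
    M ∈ T := by
  by_contra hMT
  refine (card_lt_card_of_covers M T (fun p hp hMp => hMT ?_) fun x hx => ?_).not_ge hT
  · rwa [Submodule.eq_of_le_of_finrank_le hMp (hmax p hp)]
  · exact Multiset.countP_pos.mp (h x ▸ Multiset.countP_pos.mpr ⟨M, hM, hx⟩)

theorem eq_of_card_le (h : SameIndicatorSum S T) (hS : Multiset.card S ≤ Fintype.card K) :
    S = T := by
  induction hn : Multiset.card S generalizing S T with
  | zero =>
    rw [Multiset.card_eq_zero.mp hn, Multiset.card_eq_zero.mp (h.card_eq.symm.trans hn)]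
  | succ n ih =>
    obtain ⟨M, hM, hmax⟩ := (S + T).exists_max_image (fun p : Submodule K E => finrank K p)
      (by rintro h0; simp_all)
    have hcommon : M ∈ S ∧ M ∈ T := by
      rcases Multiset.mem_add.mp hM with hMS | hMT
      · exact ⟨hMS, h.mem_of_forall_finrank_le hMS (fun p hp => hmax p (by simp [hp]))
          (h.card_eq ▸ hS)⟩
      · exact ⟨h.symm.mem_of_forall_finrank_le hMT (fun p hp => hmax p (by simp [hp]))
          (by omega), hMT⟩
    rw [← Multiset.cons_erase hcommon.1, ← Multiset.cons_erase hcommon.2,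
      ih (h.erase hcommon.1 hcommon.2) (by simp [Multiset.card_erase_of_mem hcommon.1]; omega)
        (by simp [Multiset.card_erase_of_mem hcommon.1, hn])]

theorem forall_mem_of_two_le_countP (h : SameIndicatorSum S T)
    (hS : Multiset.card S = Fintype.card K + 1) (hne : S ≠ T) {x : E}
    (hx : 2 ≤ S.countP (x ∈ ·)) : ∀ p ∈ S, x ∈ p := by
  rw [← Multiset.countP_eq_card]
  by_contra hlt
  have := Multiset.countP_le_card (x ∈ ·) S
  have := Multiset.card_eq_countP_add_countP (x ∈ ·) S
  have := Multiset.card_eq_countP_add_countP (x ∈ ·) T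
  have := h.card_eq
  have := h x
  have hin := h.filter_mem (x := x) (by omega) (by omega)
  have hout : SameIndicatorSum (S.filter (x ∉ ·)) (T.filter (x ∉ ·)) :=
    of_add (by rwa [Multiset.filter_add_not, Multiset.filter_add_not]) hin
  apply hne
  rw [← Multiset.filter_add_not (x ∈ ·) S, ← Multiset.filter_add_not (x ∈ ·) T,
    hin.eq_of_card_le (by rw [← Multiset.countP_eq_card_filter]; omega),
    hout.eq_of_card_le (by rw [← Multiset.countP_eq_card_filter]; omega)]

lemma exists_le_of_finrank_gt (h : SameIndicatorSum S T)
    (hT : Multiset.card T = Fintype.card K + 1) {D X : Submodule K E} (hDT : ∀ p ∈ T, D ≤ p)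
    (hD : ∀ x, 2 ≤ S.countP (x ∈ ·) → x ∈ D) (hX : X ∈ S) (hDX : D ≤ X)
    (hXD : finrank K D + 2 < finrank K X) : ∃ p ∈ T, X ≤ p := by
  by_contra! hno
  refine (finrank_le_finrank_add_two_of_countP_eq_one D X (T.map (X ⊓ ·)) (by simp [hT])
    ?_ ?_ fun x hx hxD => ?_).not_gt hXD
  · simpa using fun p hp => le_inf hDX (hDT p hp)
  · simpa using fun p hp => inf_lt_left.mpr (hno p hp)
  · have hpos := Multiset.countP_pos (p := (x ∈ ·)) |>.mpr ⟨X, hX, hx⟩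
    have hle := mt (hD x) hxD
    simp only [Multiset.countP_map, Submodule.mem_inf, hx, true_and,
      ← Multiset.countP_eq_card_filter, ← h x]
    omega

lemma inf_le_of_mem_erase (h : SameIndicatorSum S T)
    (hS : Multiset.card S = Fintype.card K + 1) (hne : S ≠ T) {p p' : Submodule K E}
    (hp : p ∈ S) (hp' : p' ∈ S.erase p) : ∀ r ∈ S + T, p ⊓ p' ≤ r := fun r hr x hx => by
  have h2 := Multiset.two_le_countP_of_mem_erase (P := (x ∈ ·)) hp hp' hx.1 hx.2
  rcases Multiset.mem_add.mp hr with hr | hr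
  · exact h.forall_mem_of_two_le_countP hS hne h2 r hr
  · exact h.symm.forall_mem_of_two_le_countP (h.card_eq ▸ hS) hne.symm (h x ▸ h2) r hr

theorem exists_finrank_le_finrank_inf_add_two (h : SameIndicatorSum S T)
    (hS : Multiset.card S = Fintype.card K + 1) (hne : S ≠ T) {p p' : Submodule K E}
    (hp : p ∈ S) (hp' : p' ∈ S.erase p) :
    ∃ r ∈ S, finrank K r ≤ finrank K ↥(p ⊓ p') + 2 := by
  have hinf := h.inf_le_of_mem_erase hS hne hp hp'
  have hDS r (hr : r ∈ S) := hinf r (Multiset.mem_add.mpr (.inl hr))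
  have hDT r (hr : r ∈ T) := hinf r (Multiset.mem_add.mpr (.inr hr))
  have hD x (hx : 2 ≤ S.countP (x ∈ ·)) : x ∈ p ⊓ p' :=
    have hxS := h.forall_mem_of_two_le_countP hS hne hx
    ⟨hxS p hp, hxS p' (Multiset.mem_of_mem_erase hp')⟩
  by_contra! hbig
  obtain ⟨X, hX⟩ := Multiset.card_pos_iff_exists_mem.mp (by omega : 0 < Multiset.card S)
  obtain ⟨Y, hY, hXY⟩ :=
    h.exists_le_of_finrank_gt (h.card_eq ▸ hS) hDT hD hX (hDS X hX) (hbig X hX)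
  obtain ⟨X', hX', hqX'⟩ := h.symm.exists_le_of_finrank_gt hS hDS (fun x => h x ▸ hD x) hY
    (hDT Y hY) ((hbig X hX).trans_le (Submodule.finrank_mono hXY))
  have hXX' : X' = X := by
    by_contra hne'
    refine (hbig X hX).not_ge (le_add_right (Submodule.finrank_mono fun x hx => hD x ?_))
    exact Multiset.two_le_countP_of_mem_erase (P := (x ∈ ·)) hX
      ((Multiset.mem_erase_of_ne hne').mpr hX') hx (hqX' (hXY hx))
  obtain rfl : Y = X := le_antisymm (hXX' ▸ hqX') hXY
  apply hne
  rw [← Multiset.cons_erase hX, ← Multiset.cons_erase hY, (h.erase hX hY).eq_of_card_le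
    (by rw [Multiset.card_erase_of_mem hX, hS]; simp)]

end SameIndicatorSum

lemma tuplesEquiv_of_map_dualAnnihilator_eq {K W : Type*} [Field K] [AddCommGroup W]
    [Module K W] {m : ℕ} {U V : Fin m → Submodule K W}
    (h : univ.val.map (fun i => (V i).dualAnnihilator) =
      univ.val.map fun i => (U i).dualAnnihilator) : TuplesEquiv U V :=
  have ⟨π, hπ⟩ := Fintype.exists_perm_of_map_univ_eq h
  ⟨π, fun i => Subspace.dualAnnihilator_inj.mp (hπ i)⟩

section Duality

variable {K W : Type*} [Field K] [Fintype K] [AddCommGroup W] [Module K W] [FiniteDimensional K W]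

lemma Submodule.card_inf_ker_div_card (S : Submodule K W) (φ : Module.Dual K W) :
    (Nat.card ↥(S ⊓ LinearMap.ker φ) : ℝ) / Nat.card S =
      if S ≤ LinearMap.ker φ then 1 else (Fintype.card K : ℝ)⁻¹ := by
  have : Finite W := Module.finite_of_finite K
  split_ifs with hS
  · rw [inf_eq_left.mpr hS, div_self (Nat.cast_ne_zero.mpr Nat.card_pos.ne')]
  · have hφ : φ ≠ 0 := fun h => hS (by simp [h])
    have := φ.finrank_ker_add_one_of_ne_zero hφ
    have := Submodule.finrank_lt_finrank_of_lt (right_lt_sup.mpr hS)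
    have := Submodule.finrank_le (S ⊔ LinearMap.ker φ)
    have := Submodule.finrank_sup_add_finrank_inf_eq S (LinearMap.ker φ)
    have hrank : finrank K S = finrank K ↥(S ⊓ LinearMap.ker φ) + 1 := by omega
    rw [Module.natCard_eq_pow_finrank (K := K), Module.natCard_eq_pow_finrank (K := K) (V := S),
      hrank, Nat.card_eq_fintype_card, pow_succ, Nat.cast_mul,
      div_mul_cancel_left₀ (by positivity)]

theorem IsometrySolution.sameIndicatorSum_dualAnnihilator {m : ℕ} {U V : Fin m → Submodule K W}
    (hsol : IsometrySolution U V) :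
    SameIndicatorSum (univ.val.map fun i => (V i).dualAnnihilator)
      (univ.val.map fun i => (U i).dualAnnihilator) := by
  intro φ
  have : Finite W := Module.finite_of_finite K
  have := Fintype.ofFinite W
  have hsum : ∀ C : Fin m → Submodule K W,
      ∑ w : W, (if φ w = 0 then 1 else 0) *
        ∑ i, ((Nat.card ↥(C i) : ℝ))⁻¹ * (if w ∈ C i then 1 else 0) =
      ∑ i, if C i ≤ LinearMap.ker φ then 1 else (Fintype.card K : ℝ)⁻¹ := by
    intro C
    simp_rw [← Submodule.card_inf_ker_div_card, Finset.mul_sum]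
    rw [Finset.sum_comm]
    refine Finset.sum_congr rfl fun i _ => ?_
    have hcount : ∑ w : W, (if φ w = 0 then (1 : ℝ) else 0) * (if w ∈ C i then 1 else 0) =
        Nat.card ↥(C i ⊓ LinearMap.ker φ) := by
      simp only [ite_zero_mul_ite_zero, one_mul, ← LinearMap.mem_ker, ← Submodule.mem_inf]
      rw [inf_comm, Finset.sum_boole, Nat.card_eq_fintype_card, Fintype.card_subtype]
    rw [div_eq_inv_mul, ← hcount, Finset.mul_sum]
    exact Finset.sum_congr rfl fun w _ => by ring
  have := Finset.card_filter_eq_of_sum_ite_eq (s := univ) (r := (Fintype.card K : ℝ)⁻¹)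
    (inv_lt_one_of_one_lt₀ (by exact_mod_cast Fintype.one_lt_card)).ne
    ((hsum V).symm.trans ((Finset.sum_congr rfl fun w _ => by rw [hsol w]).trans (hsum U)))
  rw [Multiset.countP_map_univ, Multiset.countP_map_univ]
  simpa [Submodule.mem_dualAnnihilator, SetLike.le_def] using this

end Duality

/-- In a nontrivial minimal solution, for any `i ≠ j` every space of both tuples is contained
in `V i + V j`, and `dim (V i + V j) ≤ 2 + max_k dim (V k)`. -/
theorem nontrivial_solution_sum_of_two_spaces
    (K W : Type*) [Field K] [Fintype K] [AddCommGroup W] [Module K W]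
    [FiniteDimensional K W]
    (U V : Fin (Fintype.card K + 1) → Submodule K W)
    (hsol : IsometrySolution U V) (hnontriv : ¬ TuplesEquiv U V) :
    ∀ i j, i ≠ j →
      (∀ k, V k ≤ V i ⊔ V j ∧ U k ≤ V i ⊔ V j) ∧
      Module.finrank K ↥(V i ⊔ V j) ≤
        2 + Finset.univ.sup (fun k => Module.finrank K ↥(V k)) := by
  intro i j hij
  have : Finite (Module.Dual K W) := Module.finite_of_finite K
  set S := univ.val.map fun k => (V k).dualAnnihilator
  have h := hsol.sameIndicatorSum_dualAnnihilator
  have hS : Multiset.card S = Fintype.card K + 1 := by simp [S]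
  have hne : S ≠ _ := fun hST => hnontriv (tuplesEquiv_of_map_dualAnnihilator_eq hST)
  have hi : (V i).dualAnnihilator ∈ S := Multiset.mem_map_of_mem _ (mem_univ_val i)
  have hj : (V j).dualAnnihilator ∈ S.erase (V i).dualAnnihilator := by
    rw [← Multiset.map_erase_of_mem _ _ (mem_univ_val i)]
    exact Multiset.mem_map_of_mem _ ((Multiset.mem_erase_of_ne hij.symm).mpr (mem_univ_val j))
  have hinf := h.inf_le_of_mem_erase hS hne hi hj
  rw [← Submodule.dualAnnihilator_sup_eq] at hinf
  refine ⟨fun k => ⟨?_, ?_⟩, ?_⟩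
  · exact Subspace.dualAnnihilator_le_dualAnnihilator_iff.mp <|
      hinf _ (Multiset.mem_add.mpr (.inl (Multiset.mem_map_of_mem _ (mem_univ_val k))))
  · exact Subspace.dualAnnihilator_le_dualAnnihilator_iff.mp <|
      hinf _ (Multiset.mem_add.mpr (.inr (Multiset.mem_map_of_mem _ (mem_univ_val k))))
  · obtain ⟨_, hp, hrank⟩ := h.exists_finrank_le_finrank_inf_add_two hS hne hi hj
    obtain ⟨k, -, rfl⟩ := Multiset.mem_map.mp hp
    rw [← Submodule.dualAnnihilator_sup_eq] at hrank
    have := Subspace.finrank_add_finrank_dualAnnihilator_eq (V i ⊔ V j)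
    have := Subspace.finrank_add_finrank_dualAnnihilator_eq (V k)
    have := Finset.le_sup (f := fun k => finrank K ↥(V k)) (mem_univ k)
    omega
end
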